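/- arXiv:2204.01557 — 4 statements merged into one kernel-verified Lean document; each statement's English description precedes it below -/
import Mathlib

section
/- For each p ∈ (0,1] let F_p be the free filter on ω dual to the summable ideal {A ⊆ ω : Σ_{n∈A} 1/(n+1)^p < ∞}, i.e., F_p = {A ⊆ ω : Σ_{n∉A} 1/(n+1)^p < ∞}. Then for every 0 < p < q ≤ 1 the filters F_p and F_q are not isomorphic: there is no bijection f : ω → ω such that F_p = {A ⊆ ω : f⁻¹[A] ∈ F_q}. -/
open Filter Topology

noncomputable section


/-- From a finset with sum ≥ 1 of values in [0,1], extract a subset with sum in [1,2]. -/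
lemma shrink_sum (v : ℕ → ℝ) (hv0 : ∀ n, 0 ≤ v n) (hv1 : ∀ n, v n ≤ 1) :
    ∀ E : Finset ℕ, 1 ≤ ∑ x ∈ E, v x →
      ∃ E' ⊆ E, 1 ≤ ∑ x ∈ E', v x ∧ ∑ x ∈ E', v x ≤ 2 := by
  intro E
  induction E using Finset.strongInductionOn with
  | _ E ih =>
    intro h1
    by_cases h2 : ∑ x ∈ E, v x ≤ 2
    · exact ⟨E, subset_rfl, h1, h2⟩
    · push_neg at h2
      have hne : E.Nonempty := by
        by_contra hE
        rw [Finset.not_nonempty_iff_eq_empty] at hE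
        simp [hE] at h1; linarith
      obtain ⟨a, ha⟩ := hne
      have hsum : ∑ x ∈ E.erase a, v x = (∑ x ∈ E, v x) - v a := by
        rw [Finset.sum_erase_eq_sub ha]
      have h1' : 1 ≤ ∑ x ∈ E.erase a, v x := by
        rw [hsum]; have := hv1 a; linarith
      obtain ⟨E', hsub, hE'⟩ := ih (E.erase a) (Finset.erase_ssubset ha) h1'
      exact ⟨E', hsub.trans (Finset.erase_subset _ _), hE'⟩

/-- If a nonneg indicator isn't summable, find finsets far out with sum in [1,2]. -/
lemma pick_exists (v : ℕ → ℝ) (hv0 : ∀ n, 0 ≤ v n) (hv1 : ∀ n, v n ≤ 1) (D : Set ℕ)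
    (hns : ¬ Summable (D.indicator v)) (m : ℕ) :
    ∃ E : Finset ℕ, (∀ x ∈ E, x ∈ D ∧ m ≤ x) ∧
      1 ≤ ∑ x ∈ E, v x ∧ ∑ x ∈ E, v x ≤ 2 := by
  classical
  set D' : Set ℕ := D ∩ {x | m ≤ x} with hD'
  have hns' : ¬ Summable (D'.indicator v) := by
    intro hs
    apply hns
    have hfin : Summable ((D ∩ {x | x < m}).indicator v) := by
      apply summable_of_ne_finset_zero (s := Finset.range m)
      intro x hx
      simp only [Finset.mem_range, not_lt] at hx
      apply Set.indicator_of_notMem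
      rintro ⟨-, hx'⟩; exact absurd hx' (by simpa using hx)
    have heq : D.indicator v = D'.indicator v + (D ∩ {x | x < m}).indicator v := by
      funext x
      by_cases hxD : x ∈ D
      · rcases le_or_gt m x with h | h
        · simp [Set.indicator_apply, hD', hxD, h, not_lt.2 h]
        · simp [Set.indicator_apply, hD', hxD, h, not_le.2 h]
      · simp [Set.indicator_apply, hD', hxD]
    rw [heq]
    exact hs.add hfin
  -- nonneg non-summable ⇒ some finset sum > 1
  have hpos : ∃ F : Finset ℕ, 1 < ∑ x ∈ F, D'.indicator v x := by
    by_contra hF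
    push_neg at hF
    exact hns' (summable_of_sum_le (fun n => Set.indicator_nonneg (fun x _ => hv0 x) n)
      (fun F => (hF F).trans one_le_two))
  obtain ⟨F, hF⟩ := hpos
  set E0 : Finset ℕ := F.filter (fun x => x ∈ D') with hE0
  have hsumE0 : ∑ x ∈ E0, v x = ∑ x ∈ F, D'.indicator v x := by
    rw [hE0, Finset.sum_filter]
    exact Finset.sum_congr rfl (fun x _ => by by_cases h : x ∈ D' <;> simp [Set.indicator_apply, h])
  obtain ⟨E, hEsub, h1, h2⟩ := shrink_sum v hv0 hv1 E0 (by rw [hsumE0]; linarith)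
  refine ⟨E, ?_, h1, h2⟩
  intro x hx
  have := hEsub hx
  rw [hE0, Finset.mem_filter] at this
  exact this.2


section
variable (v : ℕ → ℝ)

/-- Recursive block sequence given a picking function. -/
def blockSeq (pick : ℕ → ℕ → Finset ℕ) : ℕ → Finset ℕ
  | 0 => pick 0 0
  | (k+1) => pick (k+1) ((blockSeq pick k).sup id + k + 2)

end

lemma extract (u v : ℕ → ℝ) (hu : ∀ n, 0 ≤ u n) (hv0 : ∀ n, 0 ≤ v n) (hv1 : ∀ n, v n ≤ 1)
    (H : ∀ C : Set ℕ, Summable (C.indicator u) → Summable (C.indicator v)) :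
    ∃ K : ℝ, 1 ≤ K ∧ Summable ({n | K * u n < v n}.indicator v) := by
  classical
  by_contra hcon
  push_neg at hcon
  have hns : ∀ k : ℕ, ¬ Summable ({n | (2:ℝ)^k * u n < v n}.indicator v) := by
    intro k
    exact hcon ((2:ℝ)^k) (one_le_pow₀ one_le_two)
  -- picking function
  have hpick : ∀ k m : ℕ, ∃ E : Finset ℕ,
      (∀ x ∈ E, x ∈ {n | (2:ℝ)^k * u n < v n} ∧ m ≤ x) ∧
      1 ≤ ∑ x ∈ E, v x ∧ ∑ x ∈ E, v x ≤ 2 :=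
    fun k m => pick_exists v hv0 hv1 _ (hns k) m
  set pick : ℕ → ℕ → Finset ℕ := fun k m => (hpick k m).choose with hpickdef
  have hspec : ∀ k m, (∀ x ∈ pick k m, (2:ℝ)^k * u x < v x ∧ m ≤ x) ∧
      1 ≤ ∑ x ∈ pick k m, v x ∧ ∑ x ∈ pick k m, v x ≤ 2 :=
    fun k m => (hpick k m).choose_spec
  set B : ℕ → Finset ℕ := blockSeq pick with hB
  -- basic properties
  have hBmem : ∀ k, ∀ x ∈ B k, (2:ℝ)^k * u x < v x := by
    intro k; cases k with
    | zero => exact fun x hx => ((hspec 0 0).1 x hx).1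
    | succ k => exact fun x hx => ((hspec _ _).1 x hx).1
  have hBsum1 : ∀ k, 1 ≤ ∑ x ∈ B k, v x := by
    intro k; cases k with
    | zero => exact (hspec 0 0).2.1
    | succ k => exact (hspec _ _).2.1
  have hBsum2 : ∀ k, ∑ x ∈ B k, v x ≤ 2 := by
    intro k; cases k with
    | zero => exact (hspec 0 0).2.2
    | succ k => exact (hspec _ _).2.2
  have hBlow : ∀ k, ∀ x ∈ B (k+1), (B k).sup id + k + 2 ≤ x :=
    fun k x hx => ((hspec _ _).1 x hx).2
  have hBge : ∀ k, ∀ x ∈ B k, k ≤ x := by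
    intro k; cases k with
    | zero => exact fun x _ => Nat.zero_le x
    | succ k => exact fun x hx => le_trans (by omega) (hBlow k x hx)
  have hstep : ∀ k, ∀ x ∈ B k, ∀ y ∈ B (k+1), x < y := by
    intro k x hx y hy
    have h1 : x ≤ (B k).sup id := Finset.le_sup (f := id) hx
    have := hBlow k y hy
    omega
  have hne : ∀ k, (B k).Nonempty := by
    intro k
    rcases Finset.eq_empty_or_nonempty (B k) with h | h
    · exfalso; have := hBsum1 k; rw [h] at this; simp at this; linarith
    · exact h
  have hsup : ∀ k, (B k).sup id < (B (k+1)).sup id := by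
    intro k
    obtain ⟨y, hy⟩ := hne (k+1)
    have h2 := hBlow k y hy
    have h3 : y ≤ (B (k+1)).sup id := Finset.le_sup (f := id) hy
    omega
  have hsupmono : ∀ k j, j ≤ k → (B j).sup id ≤ (B k).sup id := by
    intro k
    induction k with
    | zero =>
      intro j hj
      have : j = 0 := Nat.le_zero.mp hj
      subst this; exact le_refl _
    | succ k ih =>
      intro j hj
      rcases Nat.lt_or_ge j (k+1) with h | h
      · exact le_trans (ih j (by omega)) (le_of_lt (hsup k))
      · have : j = k + 1 := by omega
        subst this; exact le_refl _
  have hBsep : ∀ j k, j < k → ∀ x ∈ B j, ∀ y ∈ B k, x < y := by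
    intro j k hjk x hx y hy
    have h1 : x ≤ (B j).sup id := Finset.le_sup (f := id) hx
    have h2 : (B j).sup id ≤ (B (k-1)).sup id := hsupmono (k-1) j (by omega)
    have hk : k - 1 + 1 = k := by omega
    have h3 := hBlow (k-1) y (by rwa [hk])
    omega
  have hdisj : ∀ j k, j ≠ k → Disjoint (B j) (B k) := by
    intro j k hjk
    rw [Finset.disjoint_left]
    intro x hxj hxk
    rcases Nat.lt_or_ge j k with h | h
    · exact lt_irrefl x (hBsep j k h x hxj x hxk)
    · exact lt_irrefl x (hBsep k j (by omega) x hxk x hxj)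
  set S : Set ℕ := {n | ∃ k, n ∈ B k} with hS
  -- S.indicator u summable with bound 4
  have hSu : Summable (S.indicator u) := by
    apply summable_of_sum_le (c := 4)
      (fun n => Set.indicator_nonneg (fun x _ => hu x) n)
    intro F
    have hsub : F.filter (· ∈ S) ⊆ (Finset.range ((F.sup id) + 1)).biUnion B := by
      intro x hx
      rw [Finset.mem_filter] at hx
      obtain ⟨hxF, k, hk⟩ := hx
      rw [Finset.mem_biUnion]
      refine ⟨k, Finset.mem_range.2 ?_, hk⟩
      have h1 := hBge k x hk
      have h2 : x ≤ F.sup id := Finset.le_sup (f := id) hxF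
      omega
    have h1 : ∑ x ∈ F, S.indicator u x = ∑ x ∈ F.filter (· ∈ S), u x := by
      rw [Finset.sum_filter]
      exact Finset.sum_congr rfl (fun x _ => by by_cases h : x ∈ S <;> simp [Set.indicator_apply, h])
    rw [h1]
    have h2 : ∑ x ∈ F.filter (· ∈ S), u x ≤ ∑ x ∈ (Finset.range ((F.sup id) + 1)).biUnion B, u x :=
      Finset.sum_le_sum_of_subset_of_nonneg hsub (fun x _ _ => hu x)
    have h3 : ∑ x ∈ (Finset.range ((F.sup id) + 1)).biUnion B, u x
        = ∑ k ∈ Finset.range ((F.sup id) + 1), ∑ x ∈ B k, u x := by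
      apply Finset.sum_biUnion
      intro a _ b _ hab
      exact hdisj a b hab
    have h4 : ∀ k, ∑ x ∈ B k, u x ≤ 2 * (1/2)^k := by
      intro k
      have : ∀ x ∈ B k, u x ≤ (1/2)^k * v x := by
        intro x hx
        have h5 := hBmem k x hx
        have h6 : (0:ℝ) < 2^k := by positivity
        rw [div_pow, one_pow, div_mul_eq_mul_div, le_div_iff₀ h6]
        nlinarith [h5]
      calc ∑ x ∈ B k, u x ≤ ∑ x ∈ B k, (1/2)^k * v x := Finset.sum_le_sum this
        _ = (1/2)^k * ∑ x ∈ B k, v x := by rw [Finset.mul_sum]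
        _ ≤ (1/2)^k * 2 := by
            apply mul_le_mul_of_nonneg_left (hBsum2 k) (by positivity)
        _ = 2 * (1/2)^k := by ring
    calc ∑ x ∈ F.filter (· ∈ S), u x ≤ _ := h2
      _ = _ := h3
      _ ≤ ∑ k ∈ Finset.range ((F.sup id) + 1), 2 * (1/2:ℝ)^k := Finset.sum_le_sum (fun k _ => h4 k)
      _ = 2 * ∑ k ∈ Finset.range ((F.sup id) + 1), (1/2:ℝ)^k := by rw [Finset.mul_sum]
      _ ≤ 2 * 2 := by
          apply mul_le_mul_of_nonneg_left (sum_geometric_two_le _) (by norm_num)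
      _ = 4 := by norm_num
  -- but S.indicator v summable gives contradiction
  have hSv := H S hSu
  obtain ⟨K, hK⟩ := exists_nat_gt (∑' n, S.indicator v n)
  have hbig : (K:ℝ) ≤ ∑ x ∈ (Finset.range K).biUnion B, S.indicator v x := by
    have h3 : ∑ x ∈ (Finset.range K).biUnion B, S.indicator v x
        = ∑ k ∈ Finset.range K, ∑ x ∈ B k, S.indicator v x := by
      apply Finset.sum_biUnion
      intro a _ b _ hab
      exact hdisj a b hab
    rw [h3]
    have h4 : ∀ k, k ∈ Finset.range K → (1:ℝ) ≤ ∑ x ∈ B k, S.indicator v x := by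
      intro k _
      have : ∑ x ∈ B k, S.indicator v x = ∑ x ∈ B k, v x := by
        apply Finset.sum_congr rfl
        intro x hx
        exact Set.indicator_of_mem (show x ∈ S from ⟨k, hx⟩) v
      rw [this]; exact hBsum1 k
    calc (K:ℝ) = ∑ _k ∈ Finset.range K, (1:ℝ) := by simp
      _ ≤ _ := Finset.sum_le_sum h4
  have := Summable.sum_le_tsum ((Finset.range K).biUnion B)
    (fun i _ => Set.indicator_nonneg (fun x _ => hv0 x) i) hSv
  linarith

lemma summable_w {r : ℝ} (hr : 1 < r) :
    Summable (fun n : ℕ => 1 / ((n : ℝ) + 1) ^ r) := by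
  have h := (Real.summable_one_div_nat_rpow (p := r)).2 hr
  have h2 : Summable ((fun n : ℕ => 1 / (n:ℝ) ^ r) ∘ (fun n : ℕ => n + 1)) :=
    h.comp_injective (add_left_injective 1)
  have heq : ((fun n : ℕ => 1 / (n:ℝ) ^ r) ∘ (fun n : ℕ => n + 1))
      = fun n : ℕ => 1 / ((n : ℝ) + 1) ^ r := by
    funext n; simp only [Function.comp]; push_cast; ring_nf
  rwa [heq] at h2

lemma not_summable_inv_succ : ¬ Summable (fun n : ℕ => 1 / ((n : ℝ) + 1)) := by
  intro h
  apply Real.not_summable_one_div_natCast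
  have := (summable_nat_add_iff (f := fun n : ℕ => 1 / (n : ℝ)) 1).1 ?_
  · exact this
  · convert h using 2 with n
    rotate_left
    push_cast; ring
    rfl


/-- Membership in the filter `F_p` dual to the summable ideal of
`f_p(n) = 1/(n+1)^p`: `A ∈ F_p` iff `Σ_{n ∉ A} 1/(n+1)^p < ∞`. -/
def memFp (p : ℝ) (A : Set ℕ) : Prop :=
  Summable (Aᶜ.indicator fun n : ℕ => 1 / ((n : ℝ) + 1) ^ p)

/-- For `0 < p < q ≤ 1` the filters `F_p` and `F_q` are not isomorphic: there is no
bijection `f : ω → ω` with `F_p = {A : f⁻¹[A] ∈ F_q}`. -/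
theorem stmt14 (p q : ℝ) (hp : 0 < p) (hpq : p < q) (hq : q ≤ 1) :
    ¬ ∃ f : ℕ → ℕ, Function.Bijective f ∧
        ∀ A : Set ℕ, (memFp p A ↔ memFp q (f ⁻¹' A)) := by
  rintro ⟨f, hf, hiso⟩
  classical
  set wp : ℕ → ℝ := fun n => 1 / ((n : ℝ) + 1) ^ p with hwp
  set wq : ℕ → ℝ := fun n => 1 / ((n : ℝ) + 1) ^ q with hwq
  set v : ℕ → ℝ := fun n => wp (f n) with hv
  set e : ℕ ≃ ℕ := Equiv.ofBijective f hf with he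
  -- reformulated iso
  have key : ∀ C : Set ℕ, Summable (C.indicator wq) → Summable (C.indicator v) := by
    intro C hC
    have hA := (hiso (f '' C)ᶜ).2 ?_
    · simp only [memFp, compl_compl] at hA
      have heq : ((f '' C).indicator wp) ∘ f = C.indicator v := by
        funext n
        by_cases hn : n ∈ C
        · have : f n ∈ f '' C := ⟨n, hn, rfl⟩
          simp [Function.comp, Set.indicator_of_mem, this, hn, hv]
        · have : f n ∉ f '' C := by
            rintro ⟨m, hm, hfm⟩
            exact hn (hf.1 hfm ▸ hm)
          simp [Function.comp, Set.indicator_of_notMem, this, hn]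
      rw [← heq]
      exact hA.comp_injective hf.1
    · -- memFp q (f ⁻¹' (f '' C)ᶜ)
      show Summable ((f ⁻¹' (f '' C)ᶜ)ᶜ.indicator wq)
      have : (f ⁻¹' (f '' C)ᶜ)ᶜ = C := by
        ext n
        simp only [Set.mem_compl_iff, Set.mem_preimage, not_not]
        constructor
        · rintro ⟨m, hm, hfm⟩; exact (hf.1 hfm) ▸ hm
        · intro hn; exact ⟨n, hn, rfl⟩
      rw [this]
      exact hC
  -- positivity facts
  have hbase : ∀ n : ℕ, (1:ℝ) ≤ (n : ℝ) + 1 := fun n => by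
    have : (0:ℝ) ≤ (n:ℝ) := Nat.cast_nonneg n
    linarith
  have hwq0 : ∀ n, 0 ≤ wq n := fun n => by positivity
  have hv0 : ∀ n, 0 ≤ v n := fun n => by positivity
  have hv1 : ∀ n, v n ≤ 1 := by
    intro n
    show 1 / ((f n : ℝ) + 1) ^ p ≤ 1
    have h1 : (1:ℝ) ≤ ((f n : ℝ) + 1) ^ p := Real.one_le_rpow (hbase (f n)) (le_of_lt hp)
    rw [div_le_one (by positivity)]
    linarith
  obtain ⟨K, hK1, hKsum⟩ := extract wq v hwq0 hv0 hv1 key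
  set D : Set ℕ := {n | K * wq n < v n} with hD
  -- the function 1/(f n + 1) is summable
  have hsum : Summable (fun n : ℕ => 1 / ((f n : ℝ) + 1)) := by
    have hsplit : (fun n : ℕ => 1 / ((f n : ℝ) + 1))
        = D.indicator (fun n => 1 / ((f n : ℝ) + 1))
          + Dᶜ.indicator (fun n => 1 / ((f n : ℝ) + 1)) :=
      (Set.indicator_self_add_compl D _).symm
    rw [hsplit]
    apply Summable.add
    · -- on D : 1/(f n + 1) ≤ v n
      apply Summable.of_nonneg_of_le
        (fun n => Set.indicator_nonneg (fun x _ => by positivity) n)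
        (fun n => ?_) hKsum
      apply Set.indicator_le_indicator
      -- 1/(f n+1) ≤ wp (f n) = 1/(f n+1)^p
      show 1 / ((f n : ℝ) + 1) ≤ 1 / ((f n : ℝ) + 1) ^ p
      have hy1 : (1:ℝ) ≤ (f n : ℝ) + 1 := hbase (f n)
      have h1 : ((f n : ℝ) + 1) ^ p ≤ (f n : ℝ) + 1 := by
        have := Real.rpow_le_rpow_of_exponent_le hy1 (le_of_lt (lt_of_lt_of_le hpq hq))
        rwa [Real.rpow_one] at this
      exact one_div_le_one_div_of_le (by positivity) h1
    · -- on Dᶜ : 1/(f n + 1) ≤ K^(1/p) * (1/(n+1)^(q/p))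
      apply Summable.of_nonneg_of_le
        (fun n => Set.indicator_nonneg (fun x _ => by positivity) n)
        (fun n => ?_)
        (((summable_w (show (1:ℝ) < q / p by
            rw [lt_div_iff₀ hp]; linarith)).mul_left (K ^ (1/p))))
      by_cases hn : n ∈ Dᶜ
      · rw [Set.indicator_of_mem hn]
        have hnD : ¬ (K * wq n < v n) := hn
        push_neg at hnD
        -- v n ≤ K * wq n  ⇒  1/(f n + 1) ≤ K^(1/p) / (n+1)^(q/p)
        set x : ℝ := (n : ℝ) + 1 with hx
        set y : ℝ := (f n : ℝ) + 1 with hy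
        have hx1 : (1:ℝ) ≤ x := hbase n
        have hy1 : (1:ℝ) ≤ y := hbase (f n)
        have hxq : (0:ℝ) < x ^ q := by positivity
        have hyp : (0:ℝ) < y ^ p := by positivity
        have h1 : x ^ q ≤ K * y ^ p := by
          have : 1 / y ^ p ≤ K * (1 / x ^ q) := hnD
          rw [div_le_iff₀ hyp] at this
          have h2 : K * (1 / x ^ q) * y ^ p = K * y ^ p / x ^ q := by ring
          rw [h2, le_div_iff₀ hxq] at this
          linarith
        have h2 : (x ^ q) ^ (1/p) ≤ (K * y ^ p) ^ (1/p) :=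
          Real.rpow_le_rpow hxq.le h1 (by positivity)
        have hx0 : (0:ℝ) < x := by linarith
        have h3 : (x ^ q) ^ (1/p) = x ^ (q/p) := by
          rw [← Real.rpow_mul hx0.le, mul_one_div]
        have h4 : (K * y ^ p) ^ (1/p) = K ^ (1/p) * y := by
          rw [Real.mul_rpow (by linarith) hyp.le, ← Real.rpow_mul (by linarith : (0:ℝ) ≤ y)]
          rw [mul_one_div, div_self (ne_of_gt hp), Real.rpow_one]
        rw [h3, h4] at h2
        -- from x^(q/p) ≤ K^(1/p) * y conclude 1/y ≤ K^(1/p) * (1/x^(q/p))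
        have hxqp : (0:ℝ) < x ^ (q/p) := by positivity
        have hy0 : (0:ℝ) < y := by linarith
        rw [mul_one_div, div_le_div_iff₀ hy0 hxqp, one_mul]
        linarith [h2]
      · rw [Set.indicator_of_notMem hn]
        positivity
  -- transfer along the bijection
  have : Summable (fun n : ℕ => 1 / ((n : ℝ) + 1)) := by
    have : (fun n : ℕ => 1 / ((n : ℝ) + 1)) ∘ e = fun n : ℕ => 1 / ((f n : ℝ) + 1) := rfl
    exact e.summable_iff.1 (this ▸ hsum)
  exact not_summable_inv_succ this
end
end

section
/- Let f : ω → ω be a bijection and let 0 < p < q ≤ 1. Then there exists a set A ⊆ ω such that Σ_{n∈A} 1/(n+1)^p = ∞ and Σ_{n∈f[A]} 1/(n+1)^q < ∞. -/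
/-!
The set `A` is a disjoint union of finite blocks `G k` with `∑_{n ∈ G k} (n+1)^{-p} ≥ 1` and
`∑_{n ∈ f[G k]} (n+1)^{-q} ≤ 2^{-k}`. Such a block exists beyond any given point `L`: as `f` is
injective, at most `M` points of `[L, L + M + N)` are sent below `M`, so `N` of them are sent into
`[M, ∞)`. With `N ≈ ε (M+1)^q` their `q`-sum is at most `ε`, while their `p`-sum is at least about
`ε (M+1)^(q-p) / 3^p`, which is large for large `M` because `p < q`.
-/

open Filter Finset Function

theorem summable_indicator_iUnion_iff {α ι : Type*} {g : α → ℝ} (hg : 0 ≤ g)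
    {s : ι → Finset α} (hs : Pairwise (Disjoint on s)) :
    Summable ((⋃ k, (s k : Set α)).indicator g) ↔ Summable fun k => ∑ a ∈ s k, g a := by
  have hs' : Pairwise (Disjoint on fun k => (s k : Set α)) :=
    fun j k hjk => Finset.disjoint_coe.2 (hs hjk)
  rw [← summable_subtype_iff_indicator, ← (Set.unionEqSigmaOfDisjoint hs').symm.summable_iff]
  refine (summable_sigma_of_nonneg fun _ => hg _).trans ?_
  simp [Finset.sum_attach, Summable.of_finite]

theorem exists_pairwise_disjoint_of_forall_exists_ge {P : ℕ → Finset ℕ → Prop}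
    (h : ∀ k L, ∃ F, P k F ∧ ∀ a ∈ F, L ≤ a) :
    ∃ G : ℕ → Finset ℕ, (∀ k, P k (G k)) ∧ Pairwise (Disjoint on G) := by
  choose F hP hL using h
  let L : ℕ → ℕ := fun n => Nat.rec 0 (fun k l => max l ((F k l).sup id) + 1) n
  have hL_succ : ∀ k, L (k + 1) = max (L k) ((F k (L k)).sup id) + 1 := fun _ => rfl
  have hF : ∀ k, (F k (L k) : Set ℕ) ⊆ Set.Ico (L k) (L (Order.succ k)) := fun k a ha => by
    have := le_sup (f := id) ha
    simp only [id, Order.succ_eq_add_one, hL_succ] at this ⊢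
    exact ⟨hL k _ a ha, by omega⟩
  have hL_mono : Monotone L := monotone_nat_of_le_succ fun k => by rw [hL_succ]; omega
  exact ⟨fun k => F k (L k), fun k => hP k _, fun j k hjk =>
    Finset.disjoint_coe.1 ((hL_mono.pairwise_disjoint_on_Ico_succ hjk).mono (hF j) (hF k))⟩

theorem Function.Injective.exists_subset_Ico_card_eq_le_apply {f : ℕ → ℕ} (hf : Injective f)
    (L M N : ℕ) : ∃ F : Finset ℕ, F ⊆ Ico L (L + M + N) ∧ #F = N ∧ ∀ a ∈ F, M ≤ f a := by
  classical
  have hcard : N ≤ #(Ico L (L + M + N) \ (range M).preimage f hf.injOn) := by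
    have h_sdiff := le_card_sdiff ((range M).preimage f hf.injOn) (Ico L (L + M + N))
    have h_preimage : #((range M).preimage f hf.injOn) ≤ M := by
      simpa using card_le_card_of_injOn (s := (range M).preimage f hf.injOn) f
        (fun a ha => mem_preimage.1 ha) hf.injOn
    rw [Nat.card_Ico] at h_sdiff
    omega
  obtain ⟨F, hF, rfl⟩ := exists_subset_card_eq hcard
  refine ⟨F, hF.trans sdiff_subset, rfl, fun a ha => ?_⟩
  simpa using (mem_sdiff.1 (hF ha)).2

theorem exists_block_size {p q ε : ℝ} (hp : 0 < p) (hpq : p < q) (hq : q ≤ 1) (hε : 0 < ε)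
    (L : ℕ) : ∃ M N : ℕ,
      1 ≤ (N : ℝ) / ((L + M + N : ℕ) : ℝ) ^ p ∧ (N : ℝ) / ((M : ℝ) + 1) ^ q ≤ ε := by
  -- `δ ≤ 1` keeps `N ≤ M + 1`, hence `L + M + N ≤ 3 (M + 1)`.
  set δ := min ε 1
  have hδ : 0 < δ := lt_min hε one_pos
  obtain ⟨M, hLM, hM⟩ : ∃ M : ℕ, L ≤ M ∧ 2 * 3 ^ p / δ ≤ ((M : ℝ) + 1) ^ (q - p) :=
    ((eventually_ge_atTop L).and <| ((tendsto_rpow_atTop (sub_pos.2 hpq)).comp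
      (tendsto_atTop_add_const_right _ 1 tendsto_natCast_atTop_atTop)).eventually_ge_atTop _).exists
  set x : ℝ := (M : ℝ) + 1
  have hx : 1 ≤ x := by simp [x]
  set N := ⌊δ * x ^ q⌋₊
  have hN_le : (N : ℝ) ≤ δ * x ^ q := Nat.floor_le (by positivity)
  have hN_gt : δ * x ^ q - 1 < N := Nat.sub_one_lt_floor _
  have hN_le_x : (N : ℝ) ≤ x := by
    calc (N : ℝ) ≤ δ * x ^ q := hN_le
      _ ≤ 1 * x ^ (1 : ℝ) := by
        gcongr
        exact min_le_right _ _
      _ = x := by simp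
  have hkey : 2 * (3 * x) ^ p ≤ δ * x ^ q := by
    rw [Real.rpow_sub (by positivity), le_div_iff₀ (by positivity), div_mul_eq_mul_div,
      div_le_iff₀ hδ] at hM
    rw [Real.mul_rpow (by norm_num) (by positivity)]
    linarith
  have h_one_le : 1 ≤ (3 * x) ^ p := Real.one_le_rpow (by linarith) hp.le
  have hB : ((L + M + N : ℕ) : ℝ) ≤ 3 * x := by
    have : (L : ℝ) ≤ M := by exact_mod_cast hLM
    push_cast
    linarith
  refine ⟨M, N, ?_, ?_⟩
  · rw [one_le_div (Real.rpow_pos_of_pos (by push_cast; linarith) _)]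
    calc ((L + M + N : ℕ) : ℝ) ^ p ≤ (3 * x) ^ p := Real.rpow_le_rpow (by positivity) hB hp.le
      _ ≤ N := by linarith
  · rw [div_le_iff₀ (by positivity)]
    exact hN_le.trans (by gcongr; exact min_le_left _ _)

theorem exists_finset_one_le_sum_rpow_and_sum_comp_le {f : ℕ → ℕ} (hf : Injective f)
    {p q ε : ℝ} (hp : 0 < p) (hpq : p < q) (hq : q ≤ 1) (hε : 0 < ε) (L : ℕ) :
    ∃ F : Finset ℕ, (∀ a ∈ F, L ≤ a) ∧ 1 ≤ ∑ a ∈ F, 1 / ((a : ℝ) + 1) ^ p ∧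
      ∑ a ∈ F, 1 / ((f a : ℝ) + 1) ^ q ≤ ε := by
  obtain ⟨M, N, h_lower, h_upper⟩ := exists_block_size hp hpq hq hε L
  obtain ⟨F, hF, rfl, hfF⟩ := hf.exists_subset_Ico_card_eq_le_apply L M N
  refine ⟨F, fun a ha => (mem_Ico.1 (hF ha)).1, ?_, ?_⟩
  · calc (1 : ℝ) ≤ #F • (1 / ((L + M + #F : ℕ) : ℝ) ^ p) := by
          rwa [nsmul_eq_mul, mul_one_div]
      _ ≤ _ := card_nsmul_le_sum _ _ _ fun a ha => by
          have ha' : a + 1 ≤ L + M + #F := (mem_Ico.1 (hF ha)).2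
          gcongr
          exact_mod_cast ha'
  · calc _ ≤ #F • (1 / ((M : ℝ) + 1) ^ q) := sum_le_card_nsmul _ _ _ fun a ha => by
          have hq0 : 0 ≤ q := (hp.trans hpq).le
          gcongr
          exact_mod_cast hfF a ha
      _ ≤ ε := by rwa [nsmul_eq_mul, mul_one_div]

/-- For every bijection `f : ω → ω` and `0 < p < q ≤ 1` there is a set `A ⊆ ω` with
`Σ_{n∈A} 1/(n+1)^p = ∞` (the series over `A` diverges) and
`Σ_{n∈f[A]} 1/(n+1)^q < ∞` (the series over `f[A]` converges). -/
theorem stmt15 (f : ℕ → ℕ) (hf : Function.Bijective f) (p q : ℝ)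
    (hp : 0 < p) (hpq : p < q) (hq : q ≤ 1) :
    ∃ A : Set ℕ,
      ¬ Summable (A.indicator fun n : ℕ => 1 / ((n : ℝ) + 1) ^ p) ∧
      Summable ((f '' A).indicator fun n : ℕ => 1 / ((n : ℝ) + 1) ^ q) := by
  classical
  obtain ⟨G, hG, hG_disj⟩ := exists_pairwise_disjoint_of_forall_exists_ge
    (P := fun k F => 1 ≤ ∑ a ∈ F, 1 / ((a : ℝ) + 1) ^ p ∧
      ∑ a ∈ F, 1 / ((f a : ℝ) + 1) ^ q ≤ (1 / 2) ^ k) fun k L =>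
    let ⟨F, hL, h_div, h_conv⟩ := exists_finset_one_le_sum_rpow_and_sum_comp_le hf.injective
      hp hpq hq (by positivity : (0 : ℝ) < (1 / 2) ^ k) L
    ⟨F, ⟨h_div, h_conv⟩, hL⟩
  have h_image : f '' ⋃ k, (G k : Set ℕ) = ⋃ k, ((G k).image f : Set ℕ) := by
    simp [Set.image_iUnion]
  refine ⟨⋃ k, (G k : Set ℕ), ?_, ?_⟩
  · rw [summable_indicator_iUnion_iff (fun n => by positivity) hG_disj]
    intro h_summable
    obtain ⟨k, hk⟩ := (h_summable.tendsto_atTop_zero.eventually_lt_const one_pos).exists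
    exact (hG k).1.not_gt hk
  · rw [h_image, summable_indicator_iUnion_iff (fun n => by positivity)
      fun j k hjk => (disjoint_image hf.injective).2 (hG_disj hjk)]
    refine summable_geometric_two.of_nonneg_of_le (fun k => sum_nonneg fun n _ => by positivity)
      fun k => ?_
    rw [sum_image hf.injective.injOn]
    exact (hG k).2
end

section
/- Let X be a Tychonoff space, G a free filter on ω, and φ : N_G → X a continuous map such that φ⁻¹(φ(p_G)) = {p_G} (in particular this holds if φ is injective). If N_G has the bounded Josefson–Nissenzweig property, then X has the bounded Josefson–Nissenzweig property. -/
open Filter Topology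

noncomputable section

/-- The topology of the space `N_F = ω ∪ {p_F}` on `Option α`, where `none` plays the
role of the point `p_F`: every `some a` is isolated, and neighborhoods of `none`
are the sets `A ∪ {p_F}` with `A ∈ F`. -/
def NFtop {α : Type*} (F : Filter α) : TopologicalSpace (Option α) where
  IsOpen U := none ∈ U → {a : α | some a ∈ U} ∈ F
  isOpen_univ := fun _ => Filter.univ_mem
  isOpen_inter := fun U V hU hV h => F.inter_sets (hU h.1) (hV h.2)
  isOpen_sUnion := fun S hS h => by
    obtain ⟨U, hU, hnU⟩ := h
    exact Filter.mem_of_superset (hS U hU hnU) fun a ha => ⟨U, hU, ha⟩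

/-- The norm `‖μ‖ = Σ |α_i|` of a finitely supported signed measure. -/
def mnorm {X : Type*} (μ : X →₀ ℝ) : ℝ := ∑ x ∈ μ.support, |μ x|

/-- The integral `μ(f) = Σ α_i f(x_i)`. -/
def mIntg {X : Type*} (μ : X →₀ ℝ) (f : X → ℝ) : ℝ := ∑ x ∈ μ.support, μ x * f x

/-- The norm of the restriction `μ ↾ A`. -/
def mnormOn {X : Type*} (μ : X →₀ ℝ) (A : Set X) : ℝ :=
  ∑ x ∈ μ.support, Set.indicator A (fun y => |μ y|) x

/-- The value `μ(A)` of a finitely supported signed measure on a set. -/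
def msetOf {X : Type*} (μ : X →₀ ℝ) (A : Set X) : ℝ :=
  ∑ x ∈ μ.support, Set.indicator A (fun y => μ y) x

/-- A JN-sequence on `X` (with topology `t`). -/
def IsJNSeq {X : Type*} (t : TopologicalSpace X) (μ : ℕ → (X →₀ ℝ)) : Prop :=
  (∀ n, mnorm (μ n) = 1) ∧
  ∀ f : X → ℝ, @Continuous X ℝ t _ f →
    Tendsto (fun n => mIntg (μ n) f) atTop (nhds 0)

/-- A BJN-sequence on `X` (with topology `t`). -/
def IsBJNSeq {X : Type*} (t : TopologicalSpace X) (μ : ℕ → (X →₀ ℝ)) : Prop :=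
  (∀ n, mnorm (μ n) = 1) ∧
  ∀ f : X → ℝ, @Continuous X ℝ t _ f → (∃ C : ℝ, ∀ x, |f x| ≤ C) →
    Tendsto (fun n => mIntg (μ n) f) atTop (nhds 0)

/-- The Josefson–Nissenzweig property. -/
def JNP {X : Type*} (t : TopologicalSpace X) : Prop := ∃ μ, IsJNSeq t μ

/-- The bounded Josefson–Nissenzweig property. -/
def BJNP {X : Type*} (t : TopologicalSpace X) : Prop := ∃ μ, IsBJNSeq t μ

/-- A free filter: a proper filter containing all cofinite sets. -/
def IsFreeFilter {α : Type*} (F : Filter α) : Prop := F.NeBot ∧ F ≤ Filter.cofinite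

/-- Katětov preorder: `F ≤_K G`. -/
def KatetovLE (F G : Filter ℕ) : Prop := ∃ f : ℕ → ℕ, ∀ A ∈ F, f ⁻¹' A ∈ G

namespace StmtAux

variable {α β : Type*}

lemma mnorm_eq_sum {μ : α →₀ ℝ} {s : Finset α} (h : μ.support ⊆ s) :
    mnorm μ = ∑ x ∈ s, |μ x| :=
  Finset.sum_subset h (fun x _ hx => by
    rw [Finsupp.notMem_support_iff.1 hx, abs_zero])

lemma mIntg_eq_sum {μ : α →₀ ℝ} (f : α → ℝ) {s : Finset α} (h : μ.support ⊆ s) :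
    mIntg μ f = ∑ x ∈ s, μ x * f x :=
  Finset.sum_subset h (fun x _ hx => by
    rw [Finsupp.notMem_support_iff.1 hx, zero_mul])

lemma mnormOn_eq_sum {μ : α →₀ ℝ} (A : Set α) {s : Finset α} (h : μ.support ⊆ s) :
    mnormOn μ A = ∑ x ∈ s, Set.indicator A (fun y => |μ y|) x :=
  Finset.sum_subset h (fun x _ hx => by
    by_cases hxA : x ∈ A
    · rw [Set.indicator_of_mem hxA, Finsupp.notMem_support_iff.1 hx, abs_zero]
    · rw [Set.indicator_of_notMem hxA])

lemma mnorm_nonneg (μ : α →₀ ℝ) : 0 ≤ mnorm μ :=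
  Finset.sum_nonneg fun _ _ => abs_nonneg _

lemma mnormOn_nonneg (μ : α →₀ ℝ) (A : Set α) : 0 ≤ mnormOn μ A :=
  Finset.sum_nonneg fun x _ => Set.indicator_nonneg (fun _ _ => abs_nonneg _) x

lemma mnormOn_le_mnorm (μ : α →₀ ℝ) (A : Set α) : mnormOn μ A ≤ mnorm μ :=
  Finset.sum_le_sum fun x _ => Set.indicator_le_self' (fun _ _ => abs_nonneg _) x

lemma mnorm_smul (c : ℝ) (μ : α →₀ ℝ) : mnorm (c • μ) = |c| * mnorm μ := by
  rw [mnorm_eq_sum (s := μ.support) Finsupp.support_smul, mnorm, Finset.mul_sum]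
  exact Finset.sum_congr rfl fun x _ => by rw [Finsupp.smul_apply, smul_eq_mul, abs_mul]

lemma mIntg_smul (c : ℝ) (μ : α →₀ ℝ) (f : α → ℝ) :
    mIntg (c • μ) f = c * mIntg μ f := by
  rw [mIntg_eq_sum f (s := μ.support) Finsupp.support_smul, mIntg, Finset.mul_sum]
  exact Finset.sum_congr rfl fun x _ => by rw [Finsupp.smul_apply, smul_eq_mul, mul_assoc]

lemma mIntg_sub (μ ν : α →₀ ℝ) (f : α → ℝ) :
    mIntg (μ - ν) f = mIntg μ f - mIntg ν f := by
  classical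
  rw [mIntg_eq_sum f (s := μ.support ∪ ν.support) (Finsupp.support_sub),
    mIntg_eq_sum f (s := μ.support ∪ ν.support) Finset.subset_union_left,
    mIntg_eq_sum f (s := μ.support ∪ ν.support) Finset.subset_union_right,
    ← Finset.sum_sub_distrib]
  exact Finset.sum_congr rfl fun x _ => by rw [Finsupp.sub_apply, sub_mul]

lemma mIntg_single (a : α) (c : ℝ) (f : α → ℝ) : mIntg (Finsupp.single a c) f = c * f a := by
  rw [mIntg_eq_sum f (s := {a}) Finsupp.support_single_subset, Finset.sum_singleton,
    Finsupp.single_eq_same]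

lemma mIntg_mapDomain (φ : α → β) (μ : α →₀ ℝ) (g : β → ℝ) :
    mIntg (Finsupp.mapDomain φ μ) g = mIntg μ (g ∘ φ) := by
  show (Finsupp.mapDomain φ μ).sum (fun y c => c * g y) = μ.sum (fun x c => c * g (φ x))
  exact Finsupp.sum_mapDomain_index (by simp) (by intros; rw [add_mul])

lemma mapDomain_nonneg {φ : α → β} {μ : α →₀ ℝ} (h : ∀ x, 0 ≤ μ x) (y : β) :
    0 ≤ Finsupp.mapDomain φ μ y := by
  classical
  rw [Finsupp.mapDomain, Finsupp.sum_apply]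
  refine Finset.sum_nonneg fun x _ => ?_
  show (0:ℝ) ≤ (Finsupp.single (φ x) (μ x)) y
  rw [Finsupp.single_apply]
  split
  · exact h x
  · exact le_refl 0

lemma mnorm_of_nonneg {μ : α →₀ ℝ} (h : ∀ x, 0 ≤ μ x) :
    mnorm μ = mIntg μ (fun _ => 1) := by
  unfold mnorm mIntg
  exact Finset.sum_congr rfl fun x _ => by rw [abs_of_nonneg (h x), mul_one]

lemma mnorm_sub_of_disjoint {μ ν : α →₀ ℝ} (h : ∀ x, μ x = 0 ∨ ν x = 0) :
    mnorm (μ - ν) = mnorm μ + mnorm ν := by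
  classical
  rw [mnorm_eq_sum (s := μ.support ∪ ν.support) Finsupp.support_sub,
    mnorm_eq_sum (μ := μ) (s := μ.support ∪ ν.support) Finset.subset_union_left,
    mnorm_eq_sum (μ := ν) (s := μ.support ∪ ν.support) Finset.subset_union_right,
    ← Finset.sum_add_distrib]
  refine Finset.sum_congr rfl fun x _ => ?_
  rcases h x with h' | h' <;> rw [Finsupp.sub_apply, h'] <;> simp [abs_neg]

lemma mIntg_abs_le {μ : α →₀ ℝ} {f : α → ℝ} {C : ℝ} (hf : ∀ x, |f x| ≤ C) :
    |mIntg μ f| ≤ C * mnorm μ := by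
  calc |mIntg μ f| ≤ ∑ x ∈ μ.support, |μ x * f x| := Finset.abs_sum_le_sum_abs _ _
    _ ≤ ∑ x ∈ μ.support, C * |μ x| := Finset.sum_le_sum fun x _ => by
        rw [abs_mul, mul_comm]
        exact mul_le_mul_of_nonneg_right (hf x) (abs_nonneg _)
    _ = C * mnorm μ := by rw [mnorm, Finset.mul_sum]

lemma mnormOn_mono {μ : α →₀ ℝ} {A B : Set α} (h : A ⊆ B) : mnormOn μ A ≤ mnormOn μ B :=
  Finset.sum_le_sum fun x _ =>
    Set.indicator_le_indicator_of_subset h (fun _ => abs_nonneg _) x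

lemma mnormOn_le_of_dom {μ ν : α →₀ ℝ} (hsupp : μ.support ⊆ ν.support)
    (hd : ∀ x, |μ x| ≤ |ν x|) (A : Set α) : mnormOn μ A ≤ mnormOn ν A := by
  rw [mnormOn_eq_sum A hsupp, mnormOn]
  refine Finset.sum_le_sum fun x _ => ?_
  by_cases hxA : x ∈ A
  · rw [Set.indicator_of_mem hxA, Set.indicator_of_mem hxA]; exact hd x
  · rw [Set.indicator_of_notMem hxA, Set.indicator_of_notMem hxA]

lemma mnorm_le_of_dom {μ ν : α →₀ ℝ} (hsupp : μ.support ⊆ ν.support)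
    (hd : ∀ x, |μ x| ≤ |ν x|) : mnorm μ ≤ mnorm ν := by
  rw [mnorm_eq_sum hsupp]
  exact Finset.sum_le_sum fun x _ => hd x

lemma mnormOn_finset_le (μ : α →₀ ℝ) (A : Finset α) :
    mnormOn μ ↑A ≤ ∑ x ∈ A, |μ x| := by
  classical
  rw [mnormOn_eq_sum (↑A : Set α) (s := μ.support ∪ A) Finset.subset_union_left]
  calc ∑ x ∈ μ.support ∪ A, Set.indicator ↑A (fun y => |μ y|) x
      = ∑ x ∈ (μ.support ∪ A).filter (· ∈ A), |μ x| := by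
        rw [Finset.sum_filter]
        refine Finset.sum_congr rfl fun x _ => ?_
        by_cases hxA : x ∈ A
        · rw [Set.indicator_of_mem (by exact_mod_cast hxA), if_pos hxA]
        · rw [Set.indicator_of_notMem (by exact_mod_cast hxA), if_neg hxA]
    _ ≤ ∑ x ∈ A, |μ x| := Finset.sum_le_sum_of_subset_of_nonneg
        (fun x hx => (Finset.mem_filter.1 hx).2) (fun _ _ _ => abs_nonneg _)

lemma mnormOn_empty (μ : α →₀ ℝ) : mnormOn μ (∅ : Set α) = 0 := by
  unfold mnormOn; simp

lemma mIntg_sub_const (μ : α →₀ ℝ) (f : α → ℝ) (L : ℝ) :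
    mIntg μ (fun x => f x - L) = mIntg μ f - L * mIntg μ (fun _ => 1) := by
  unfold mIntg
  rw [Finset.mul_sum, ← Finset.sum_sub_distrib]
  exact Finset.sum_congr rfl fun x _ => by ring

lemma mIntg_indicator [DecidableEq α] (μ : α →₀ ℝ) (a : α) :
    mIntg μ (fun x => if x = a then (1:ℝ) else 0) = μ a := by
  classical
  unfold mIntg
  rw [Finset.sum_congr rfl (fun x _ => ?_), Finset.sum_ite_eq' μ.support a (fun x => μ x)]
  · split
    · rfl
    · exact (Finsupp.notMem_support_iff.1 (by assumption)).symm
  · show μ x * (if x = a then (1:ℝ) else 0) = if x = a then μ x else 0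
    split <;> ring



/-- positive part of `μ` with the atom at `none` removed -/
def Pos (μ : Option α →₀ ℝ) : Option α →₀ ℝ :=
  Finsupp.mapRange (fun r => max r 0) (by simp) (μ.erase none)

lemma Pos_apply (μ : Option α →₀ ℝ) (x : Option α) :
    Pos μ x = max ((μ.erase none) x) 0 := by
  rw [Pos, Finsupp.mapRange_apply]

lemma Pos_nonneg (μ : Option α →₀ ℝ) (x : Option α) : 0 ≤ Pos μ x := by
  rw [Pos_apply]; exact le_max_right _ _

lemma Pos_none (μ : Option α →₀ ℝ) : Pos μ none = 0 := by
  rw [Pos_apply, Finsupp.erase_same, max_self]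

lemma Pos_support (μ : Option α →₀ ℝ) : (Pos μ).support ⊆ μ.support := by
  classical
  refine subset_trans Finsupp.support_mapRange ?_
  rw [Finsupp.support_erase]
  exact Finset.erase_subset _ _

lemma Pos_abs_le (μ : Option α →₀ ℝ) (x : Option α) : |Pos μ x| ≤ |μ x| := by
  rw [Pos_apply, abs_of_nonneg (le_max_right _ _)]
  cases x with
  | none => rw [Finsupp.erase_same]; simp
  | some t =>
    rw [Finsupp.erase_ne (by simp)]
    exact max_le (le_abs_self _) (abs_nonneg _)

lemma erase_neg (μ : Option α →₀ ℝ) :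
    Finsupp.erase none (-μ) = -(Finsupp.erase none μ) := by
  ext x
  cases x with
  | none => simp [Finsupp.erase_same]
  | some t => simp [Finsupp.erase_ne]

lemma mnorm_neg (μ : Option α →₀ ℝ) : mnorm (-μ) = mnorm μ := by
  rw [mnorm_eq_sum (μ := -μ) (s := μ.support) (by rw [Finsupp.support_neg])]
  exact Finset.sum_congr rfl fun x _ => by rw [Finsupp.neg_apply, abs_neg]

lemma mnorm_erase_none (μ : Option α →₀ ℝ) :
    mnorm (Finsupp.erase none μ) = mnorm μ - |μ none| := by
  classical
  have h1 : μ = Finsupp.single none (μ none) + Finsupp.erase none μ :=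
    (Finsupp.single_add_erase none μ).symm
  have hs : (Finsupp.erase none μ).support ⊆ μ.support ∪ {none} := by
    rw [Finsupp.support_erase]
    exact subset_trans (Finset.erase_subset _ _) Finset.subset_union_left
  have hs2 : μ.support ⊆ μ.support ∪ {none} := Finset.subset_union_left
  have hmem : none ∈ μ.support ∪ {none} := Finset.mem_union_right _ (Finset.mem_singleton_self _)
  rw [mnorm_eq_sum hs, mnorm_eq_sum hs2, eq_sub_iff_add_eq,
    ← Finset.add_sum_erase _ _ hmem, ← Finset.add_sum_erase _ (fun x => |μ x|) hmem,
    Finsupp.erase_same, abs_zero, zero_add, add_comm]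
  congr 1
  refine Finset.sum_congr rfl fun x hx => ?_
  rw [Finsupp.erase_ne (Finset.ne_of_mem_erase hx)]

lemma mnorm_Pos_add_Pos_neg (μ : Option α →₀ ℝ) :
    mnorm (Pos μ) + mnorm (Pos (-μ)) = mnorm μ - |μ none| := by
  rw [← mnorm_erase_none,
    mnorm_eq_sum (μ := Pos μ) (s := (Finsupp.erase none μ).support)
      (subset_trans Finsupp.support_mapRange (subset_refl _)),
    mnorm_eq_sum (μ := Pos (-μ)) (s := (Finsupp.erase none μ).support) ?hs,
    mnorm, ← Finset.sum_add_distrib]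
  case hs =>
    refine subset_trans Finsupp.support_mapRange ?_
    rw [erase_neg, Finsupp.support_neg]
  refine Finset.sum_congr rfl fun x _ => ?_
  rw [Pos_apply, Pos_apply, erase_neg, Finsupp.neg_apply]
  rcases le_total ((Finsupp.erase none μ) x) 0 with h | h
  · rw [max_eq_right h, abs_zero, zero_add, max_eq_left (by linarith),
      abs_of_nonneg (by linarith), abs_of_nonpos h]
  · rw [max_eq_left h, max_eq_right (by linarith), abs_zero, add_zero, abs_of_nonneg h]

section NF

variable {F : Filter α}

lemma isOpen_NFtop {U : Set (Option α)} :
    IsOpen[NFtop F] U ↔ (none ∈ U → {a | some a ∈ U} ∈ F) := Iff.rfl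

lemma contNF_of {f : Option α → ℝ}
    (h : ∀ ε > (0:ℝ), {t | |f (some t) - f none| < ε} ∈ F) :
    @Continuous _ _ (NFtop F) _ f := by
  rw [@continuous_def _ _ (NFtop F) _]
  intro U hU
  rw [isOpen_NFtop]
  intro hnone
  obtain ⟨ε, hε, hball⟩ := Metric.isOpen_iff.1 hU (f none) hnone
  refine Filter.mem_of_superset (h ε hε) fun t ht => ?_
  exact hball (show dist (f (some t)) (f none) < ε by rwa [Real.dist_eq])

lemma mem_of_contNF {f : Option α → ℝ} (hf : @Continuous _ _ (NFtop F) _ f) :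
    ∀ ε > (0:ℝ), {t | |f (some t) - f none| < ε} ∈ F := by
  intro ε hε
  have hop : IsOpen[NFtop F] (f ⁻¹' Metric.ball (f none) ε) :=
    @Continuous.isOpen_preimage _ _ (NFtop F) _ f hf _ Metric.isOpen_ball
  have hmem := (isOpen_NFtop.1 hop) (by simp [Metric.mem_ball, hε])
  refine Filter.mem_of_superset hmem fun t ht => ?_
  simpa [Real.dist_eq] using ht

end NF
lemma mnorm_single (a : α) (c : ℝ) : mnorm (Finsupp.single a c) = |c| := by
  rw [mnorm_eq_sum (Finsupp.support_single_subset), Finset.sum_singleton,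
    Finsupp.single_eq_same]

lemma mIntg_erase_none (μ : Option α →₀ ℝ) (f : Option α → ℝ) :
    mIntg μ f = μ none * f none + mIntg (Finsupp.erase none μ) f := by
  classical
  have hs : (Finsupp.erase none μ).support ⊆ μ.support ∪ {none} := by
    rw [Finsupp.support_erase]
    exact subset_trans (Finset.erase_subset _ _) Finset.subset_union_left
  have hs2 : μ.support ⊆ μ.support ∪ {none} := Finset.subset_union_left
  have hmem : none ∈ μ.support ∪ {none} := Finset.mem_union_right _ (Finset.mem_singleton_self _)
  have key : ∑ x ∈ (μ.support ∪ {none}).erase none, (Finsupp.erase none μ) x * f x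
      = ∑ x ∈ (μ.support ∪ {none}).erase none, μ x * f x :=
    Finset.sum_congr rfl fun x hx => by rw [Finsupp.erase_ne (Finset.ne_of_mem_erase hx)]
  rw [mIntg_eq_sum f hs, mIntg_eq_sum f hs2,
    ← Finset.add_sum_erase _ (fun x => (Finsupp.erase none μ) x * f x) hmem,
    ← Finset.add_sum_erase _ (fun x => μ x * f x) hmem,
    Finsupp.erase_same, zero_mul, zero_add, key]

lemma mIntg_split {μ : α →₀ ℝ} {f : α → ℝ} {ε C : ℝ} (hε : 0 ≤ ε) (hC : ∀ x, |f x| ≤ C) :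
    |mIntg μ f| ≤ ε * mnorm μ + C * mnormOn μ {x | ε < |f x|} := by
  calc |mIntg μ f| ≤ ∑ x ∈ μ.support, |μ x * f x| := Finset.abs_sum_le_sum_abs _ _
    _ ≤ ∑ x ∈ μ.support,
        (ε * |μ x| + C * Set.indicator {x | ε < |f x|} (fun y => |μ y|) x) := by
      refine Finset.sum_le_sum fun x _ => ?_
      by_cases hx : ε < |f x|
      · rw [Set.indicator_of_mem (show x ∈ {x | ε < |f x|} from hx), abs_mul]
        have : |μ x| * |f x| ≤ C * |μ x| := by
          rw [mul_comm]
          exact mul_le_mul_of_nonneg_right (hC x) (abs_nonneg _)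
        nlinarith [abs_nonneg (μ x)]
      · rw [Set.indicator_of_notMem (show x ∉ {x | ε < |f x|} from hx), mul_zero, add_zero, abs_mul]
        push_neg at hx
        calc |μ x| * |f x| ≤ |μ x| * ε := mul_le_mul_of_nonneg_left hx (abs_nonneg _)
          _ = ε * |μ x| := mul_comm _ _
    _ = ε * mnorm μ + C * mnormOn μ {x | ε < |f x|} := by
      rw [Finset.sum_add_distrib, mnorm, mnormOn, Finset.mul_sum, Finset.mul_sum]

lemma abs_sign_le (r : ℝ) : |Real.sign r| ≤ 1 := by
  rcases Real.sign_apply_eq r with h | h | h <;> rw [h] <;> norm_num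

lemma mul_sign_eq_abs (r : ℝ) : r * Real.sign r = |r| := by
  rcases lt_trichotomy r 0 with h | h | h
  · rw [Real.sign_of_neg h, abs_of_neg h]; ring
  · simp [h]
  · rw [Real.sign_of_pos h, abs_of_pos h]; ring
/-- Recursive choice of a rapidly spreading subsequence. -/
def NState (μ : ℕ → (Option ℕ →₀ ℝ))
    (H : ∀ (M k : ℕ) (A : Finset (Option ℕ)), none ∉ A →
      ∃ m, M < m ∧ |μ m none| ≤ 3/5 ∧ mnormOn (μ m) ↑A ≤ (1/2)^k) :
    ℕ → ℕ × {A : Finset (Option ℕ) // none ∉ A}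
  | 0 =>
    let m := (H 0 0 ∅ (by simp)).choose
    ⟨m, ⟨((μ m).support).erase none, by simp⟩⟩
  | (k+1) =>
    let p := NState μ H k
    let m := (H p.1 (k+1) p.2.1 p.2.2).choose
    ⟨m, ⟨p.2.1 ∪ ((μ m).support).erase none, by simp [Finset.mem_union, p.2.2]⟩⟩
theorem main {X : Type*} [tX : TopologicalSpace X] (G : Filter ℕ) (hG : G ≤ Filter.cofinite)
    (φ : Option ℕ → X) (hcont : @Continuous _ _ (NFtop G) tX φ)
    (hfib : φ ⁻¹' {φ none} = {none})
    (μ : ℕ → (Option ℕ →₀ ℝ)) (Hnorm : ∀ n, mnorm (μ n) = 1)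
    (Hint : ∀ f : Option ℕ → ℝ, @Continuous _ _ (NFtop G) _ f → (∃ C : ℝ, ∀ x, |f x| ≤ C) →
      Tendsto (fun n => mIntg (μ n) f) atTop (nhds 0)) :
    BJNP tX := by
  classical
  -- pointwise convergence at isolated points
  have P1 : ∀ t : ℕ, Tendsto (fun m => μ m (some t)) atTop (nhds 0) := by
    intro t
    have hcont' : @Continuous _ _ (NFtop G) _
        (fun x : Option ℕ => if x = some t then (1:ℝ) else 0) := by
      apply contNF_of
      intro ε hε
      have hmem : {t' : ℕ | t' ≠ t} ∈ Filter.cofinite := by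
        rw [Filter.mem_cofinite]
        have : {t' : ℕ | t' ≠ t}ᶜ = {t} := by ext a; simp [not_not]
        rw [this]; exact Set.finite_singleton t
      refine Filter.mem_of_superset (hG hmem) fun a ha => ?_
      have h1 : (if (some a : Option ℕ) = some t then (1:ℝ) else 0) = 0 := by
        simp only [Option.some.injEq]; rw [if_neg ha]
      have h2 : (if (none : Option ℕ) = some t then (1:ℝ) else 0) = 0 := by
        rw [if_neg (by simp)]
      show |_ - _| < ε
      rw [h1, h2, sub_zero, abs_zero]; exact hε
    have hbd : ∃ C : ℝ, ∀ x : Option ℕ, |if x = some t then (1:ℝ) else 0| ≤ C :=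
      ⟨1, fun x => by split <;> norm_num⟩
    have hT := Hint _ hcont' hbd
    have heq : ∀ m, mIntg (μ m) (fun x => if x = some t then (1:ℝ) else 0) = μ m (some t) :=
      fun m => mIntg_indicator (μ m) (some t)
    simpa only [heq] using hT
  -- the total mass tends to zero
  have T1 : Tendsto (fun m => mIntg (μ m) (fun _ => (1:ℝ))) atTop (nhds 0) :=
    Hint _ (@continuous_const _ _ (NFtop G) _ _) ⟨1, fun x => by norm_num⟩
  -- the atom at `none` is eventually at most 3/5
  have Hc : ∀ᶠ m in atTop, |μ m none| ≤ 3/5 := by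
    have h1 : ∀ᶠ m in atTop, |mIntg (μ m) (fun _ => (1:ℝ))| ≤ 1/5 := by
      obtain ⟨N, hN⟩ := Metric.tendsto_atTop.1 T1 (1/5) (by norm_num)
      refine Filter.eventually_atTop.2 ⟨N, fun m hm => ?_⟩
      have := hN m hm; rw [Real.dist_eq, sub_zero] at this; linarith
    refine h1.mono fun m hm => ?_
    have e1 : mIntg (μ m) (fun _ => (1:ℝ))
        = μ m none * 1 + mIntg (Finsupp.erase none (μ m)) (fun _ => 1) :=
      mIntg_erase_none _ _
    have e2 : |mIntg (Finsupp.erase none (μ m)) (fun _ => (1:ℝ))|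
        ≤ 1 * mnorm (Finsupp.erase none (μ m)) := mIntg_abs_le (fun x => by norm_num)
    have e3 : mnorm (Finsupp.erase none (μ m)) = mnorm (μ m) - |μ m none| :=
      mnorm_erase_none _
    have e4 : mnorm (μ m) = 1 := Hnorm m
    rw [mul_one] at e1
    have e5 : |μ m none| = |mIntg (μ m) (fun _ => (1:ℝ))
        - mIntg (Finsupp.erase none (μ m)) (fun _ => 1)| := by rw [e1]; ring_nf
    have e6 := abs_sub (mIntg (μ m) (fun _ => (1:ℝ)))
      (mIntg (Finsupp.erase none (μ m)) (fun _ => 1))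
    rw [e3, e4] at e2
    have e7 : |μ m none| ≤ 1/5 + 1 * (1 - |μ m none|) :=
      calc |μ m none| = |mIntg (μ m) (fun _ => (1:ℝ))
            - mIntg (Finsupp.erase none (μ m)) (fun _ => 1)| := e5
        _ ≤ |mIntg (μ m) (fun _ => (1:ℝ))|
            + |mIntg (Finsupp.erase none (μ m)) (fun _ => 1)| := abs_sub _ _
        _ ≤ 1/5 + 1 * (1 - |μ m none|) := add_le_add hm e2
    linarith
  -- existence of good indices
  have Hex : ∀ (M k : ℕ) (A : Finset (Option ℕ)), none ∉ A →
      ∃ m, M < m ∧ |μ m none| ≤ 3/5 ∧ mnormOn (μ m) ↑A ≤ (1/2)^k := by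
    intro M k A hA
    have h2 : Tendsto (fun m => ∑ x ∈ A, |μ m x|) atTop (nhds 0) := by
      have hterm : ∀ x ∈ A, Tendsto (fun m => |μ m x|) atTop (nhds 0) := by
        intro x hx
        match x with
        | none => exact absurd hx hA
        | some t =>
          have := (P1 t).abs
          simpa using this
      have := tendsto_finset_sum A hterm
      simpa using this
    have h3 : ∀ᶠ m in atTop, mnormOn (μ m) ↑A ≤ (1/2)^k := by
      have hpos : (0:ℝ) < (1/2)^k := by positivity
      obtain ⟨N, hN⟩ := Metric.tendsto_atTop.1 h2 ((1/2)^k) hpos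
      refine Filter.eventually_atTop.2 ⟨N, fun m hm => ?_⟩
      have hd := hN m hm
      rw [Real.dist_eq, sub_zero] at hd
      refine le_trans (mnormOn_finset_le _ _) ?_
      exact le_of_lt (lt_of_le_of_lt (le_abs_self _) hd)
    obtain ⟨m, hm⟩ := ((Hc.and h3).and (Filter.eventually_gt_atTop M)).exists
    exact ⟨m, hm.2, hm.1.1, hm.1.2⟩
  -- the extracted subsequence
  let St := NState μ Hex
  let nn : ℕ → ℕ := fun k => (St k).1
  let lam : ℕ → (Option ℕ →₀ ℝ) := fun k => μ (nn k)
  let Ak : ℕ → Finset (Option ℕ) := fun k => match k with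
    | 0 => ∅
    | (k+1) => (St k).2.1
  have hAkS : ∀ k, Ak (k+1) = (St k).2.1 := fun _ => rfl
  have hAk0 : Ak 0 = ∅ := rfl
  have hA2 : ∀ k, (St k).2.1 = Ak k ∪ ((lam k).support).erase none := by
    intro k
    cases k with
    | zero => rw [hAk0, Finset.empty_union]; rfl
    | succ k => rfl
  have hnone : ∀ k, none ∉ Ak k := by
    intro k
    cases k with
    | zero => rw [hAk0]; exact Finset.notMem_empty _
    | succ k => exact (St k).2.2
  have hlt : ∀ k, nn k < nn (k+1) :=
    fun k => (Hex (nn k) (k+1) (St k).2.1 (St k).2.2).choose_spec.1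
  have hcb : ∀ k, |lam k none| ≤ 3/5 := by
    intro k
    cases k with
    | zero => exact (Hex 0 0 ∅ (by simp)).choose_spec.2.1
    | succ k => exact (Hex (nn k) (k+1) (St k).2.1 (St k).2.2).choose_spec.2.1
  have hAkb : ∀ k, mnormOn (lam k) ((Ak k : Set (Option ℕ))) ≤ (1/2)^k := by
    intro k
    cases k with
    | zero =>
      rw [hAk0, Finset.coe_empty, mnormOn_empty]
      norm_num
    | succ k => exact (Hex (nn k) (k+1) (St k).2.1 (St k).2.2).choose_spec.2.2
  have hsub : ∀ j k, j < k → ((lam j).support).erase none ⊆ Ak k := by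
    intro j k hjk
    induction k with
    | zero => omega
    | succ k ih =>
      rcases Nat.lt_succ_iff_lt_or_eq.1 hjk with h | h
      · refine subset_trans (ih h) ?_
        rw [hAkS k, hA2 k]
        exact Finset.subset_union_left
      · subst h
        rw [hAkS j, hA2 j]
        exact Finset.subset_union_right
  let R : ℕ → Set (Option ℕ) := fun k => {x | x ∈ (lam k).support ∧ x ∉ Ak k ∧ x ≠ none}
  have hRuniq : ∀ {x : Option ℕ} {k k' : ℕ}, x ∈ R k → x ∈ R k' → k = k' := by
    intro x k k' h1 h2
    by_contra hne
    rcases Ne.lt_or_gt hne with h | h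
    · exact h2.2.1 (hsub k k' h (Finset.mem_erase.2 ⟨h1.2.2, h1.1⟩))
    · exact h1.2.1 (hsub k' k h (Finset.mem_erase.2 ⟨h2.2.2, h2.1⟩))
  have hsm : StrictMono nn := strictMono_nat_of_lt_succ hlt
  -- the variation claim
  have V : ∀ B : Set (Option ℕ), none ∉ B → {t : ℕ | some t ∉ B} ∈ G →
      Tendsto (fun k => mnormOn (lam k) B) atTop (nhds 0) := by
    intro B hB hBG
    let fV : Option ℕ → ℝ := fun x =>
      match x with
      | none => 0
      | some t =>
        if hx : (some t ∈ B ∧ ∃ k, some t ∈ R k)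
          then Real.sign (lam hx.2.choose (some t)) else 0
    have hfVnone : fV none = 0 := rfl
    have hfVsome : ∀ t : ℕ, fV (some t)
        = (if hx : (some t ∈ B ∧ ∃ k, some t ∈ R k)
            then Real.sign (lam hx.2.choose (some t)) else 0) := fun t => rfl
    have hfVb : ∀ x, |fV x| ≤ 1 := by
      intro x
      match x with
      | none => rw [hfVnone, abs_zero]; norm_num
      | some t =>
        rw [hfVsome t]
        split
        · exact abs_sign_le _
        · rw [abs_zero]; norm_num
    have hfVcont : @Continuous _ _ (NFtop G) _ fV := by
      apply contNF_of
      intro ε hε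
      refine Filter.mem_of_superset hBG fun t ht => ?_
      have h0 : fV (some t) = 0 := by
        rw [hfVsome t, dif_neg]
        intro hx
        exact ht hx.1
      show |fV (some t) - fV none| < ε
      rw [h0, hfVnone, sub_zero, abs_zero]
      exact hε
    have hTfV : Tendsto (fun k => mIntg (lam k) fV) atTop (nhds 0) :=
      (Hint fV hfVcont ⟨1, hfVb⟩).comp hsm.tendsto_atTop
    have hkey : ∀ k, mnormOn (lam k) B ≤ mIntg (lam k) fV + 2 * mnormOn (lam k) ((Ak k : Set (Option ℕ))) := by
      intro k
      set s := (lam k).support with hs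
      set p : Option ℕ → Prop := fun x => x ∈ B ∧ x ∈ R k with hp
      have h1 : ∀ x ∈ s.filter p, lam k x * fV x = |lam k x| := by
        intro x hx
        obtain ⟨hxs, hxB, hxR⟩ : x ∈ s ∧ x ∈ B ∧ x ∈ R k := by
          have := Finset.mem_filter.1 hx
          exact ⟨this.1, this.2.1, this.2.2⟩
        obtain ⟨t, rfl⟩ : ∃ t, x = some t := by
          cases x with
          | none => exact absurd rfl hxR.2.2
          | some t => exact ⟨t, rfl⟩
        have hex : some t ∈ B ∧ ∃ k', some t ∈ R k' := ⟨hxB, ⟨k, hxR⟩⟩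
        have h1' : fV (some t) = Real.sign (lam hex.2.choose (some t)) := by
          rw [hfVsome t, dif_pos hex]
        have hck : hex.2.choose = k := hRuniq hex.2.choose_spec hxR
        rw [h1', hck, mul_sign_eq_abs]
      have h2 : ∀ x ∈ s.filter (fun x => ¬ p x),
          |lam k x * fV x| ≤ Set.indicator ((Ak k : Set (Option ℕ))) (fun y => |lam k y|) x := by
        intro x hx
        obtain ⟨hxs, hxnp⟩ := Finset.mem_filter.1 hx
        by_cases hz : fV x = 0
        · rw [hz, mul_zero, abs_zero]
          exact Set.indicator_nonneg (fun _ _ => abs_nonneg _) x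
        · obtain ⟨t, rfl⟩ : ∃ t, x = some t := by
            cases x with
            | none => exact absurd hfVnone hz
            | some t => exact ⟨t, rfl⟩
          have hex : some t ∈ B ∧ ∃ k', some t ∈ R k' := by
            by_contra hno
            apply hz
            rw [hfVsome t, dif_neg hno]
          have hkc := hex.2.choose_spec
          have hkne : hex.2.choose ≠ k := fun e => hxnp ⟨hex.1, e ▸ hkc⟩
          have hxAk : some t ∈ Ak k := by
            rcases Ne.lt_or_gt hkne with h | h
            · exact hsub _ k h (Finset.mem_erase.2 ⟨by simp, hkc.1⟩)
            · exact absurd (hsub k _ h (Finset.mem_erase.2 ⟨by simp, hxs⟩)) hkc.2.1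
          rw [Set.indicator_of_mem (by exact_mod_cast hxAk)]
          calc |lam k (some t) * fV (some t)| = |lam k (some t)| * |fV (some t)| := abs_mul _ _
            _ ≤ |lam k (some t)| * 1 :=
                mul_le_mul_of_nonneg_left (hfVb (some t)) (abs_nonneg _)
            _ = |lam k (some t)| := mul_one _
      -- assemble
      have hIntg : mIntg (lam k) fV
          = ∑ x ∈ s.filter p, lam k x * fV x + ∑ x ∈ s.filter (fun x => ¬ p x), lam k x * fV x :=
        (Finset.sum_filter_add_sum_filter_not s p _).symm
      have hmB : mnormOn (lam k) B
          = ∑ x ∈ s.filter p, Set.indicator B (fun y => |lam k y|) x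
            + ∑ x ∈ s.filter (fun x => ¬ p x), Set.indicator B (fun y => |lam k y|) x :=
        (Finset.sum_filter_add_sum_filter_not s p _).symm
      have hA : ∑ x ∈ s.filter p, Set.indicator B (fun y => |lam k y|) x
          = ∑ x ∈ s.filter p, |lam k x| := by
        refine Finset.sum_congr rfl fun x hx => ?_
        exact Set.indicator_of_mem (Finset.mem_filter.1 hx).2.1 _
      have hBpart : ∑ x ∈ s.filter (fun x => ¬ p x), Set.indicator B (fun y => |lam k y|) x
          ≤ ∑ x ∈ s.filter (fun x => ¬ p x), Set.indicator ((Ak k : Set (Option ℕ))) (fun y => |lam k y|) x := by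
        refine Finset.sum_le_sum fun x hx => ?_
        obtain ⟨hxs, hxnp⟩ := Finset.mem_filter.1 hx
        by_cases hxB : x ∈ B
        · have hxne : x ≠ none := fun e => hB (e ▸ hxB)
          have hxR : x ∉ R k := fun hr => hxnp ⟨hxB, hr⟩
          have hxA : x ∈ Ak k := by
            by_contra hxA
            exact hxR ⟨hxs, hxA, hxne⟩
          rw [Set.indicator_of_mem hxB, Set.indicator_of_mem (by exact_mod_cast hxA)]
        · rw [Set.indicator_of_notMem hxB]
          exact Set.indicator_nonneg (fun _ _ => abs_nonneg _) x
      have hAkfull : ∀ (u : Finset (Option ℕ)), u ⊆ s →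
          ∑ x ∈ u, Set.indicator ((Ak k : Set (Option ℕ))) (fun y => |lam k y|) x ≤ mnormOn (lam k) ((Ak k : Set (Option ℕ))) := by
        intro u hu
        exact Finset.sum_le_sum_of_subset_of_nonneg hu
          (fun x _ _ => Set.indicator_nonneg (fun _ _ => abs_nonneg _) x)
      have hC : ∑ x ∈ s.filter p, |lam k x| ≤ mIntg (lam k) fV + mnormOn (lam k) ((Ak k : Set (Option ℕ))) := by
        have e1 : ∑ x ∈ s.filter p, |lam k x| = ∑ x ∈ s.filter p, lam k x * fV x :=
          (Finset.sum_congr rfl h1).symm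
        have e2 : - ∑ x ∈ s.filter (fun x => ¬ p x), lam k x * fV x
            ≤ ∑ x ∈ s.filter (fun x => ¬ p x), |lam k x * fV x| := by
          exact le_trans (neg_le_abs _) (Finset.abs_sum_le_sum_abs _ _)
        have e3 : ∑ x ∈ s.filter (fun x => ¬ p x), |lam k x * fV x|
            ≤ mnormOn (lam k) ((Ak k : Set (Option ℕ))) :=
          le_trans (Finset.sum_le_sum h2) (hAkfull _ (Finset.filter_subset _ _))
        rw [e1]
        have := hIntg
        linarith
      rw [hmB, hA]
      have hD : ∑ x ∈ s.filter (fun x => ¬ p x), Set.indicator ((Ak k : Set (Option ℕ))) (fun y => |lam k y|) x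
          ≤ mnormOn (lam k) ((Ak k : Set (Option ℕ))) := hAkfull _ (Finset.filter_subset _ _)
      linarith
    refine squeeze_zero (fun k => mnormOn_nonneg _ _)
      (fun k => le_trans (hkey k) (add_le_add (le_refl _)
        (mul_le_mul_of_nonneg_left (hAkb k) (by norm_num)))) ?_
    have hpow : Tendsto (fun k : ℕ => (2:ℝ) * (1/2)^k) atTop (nhds 0) := by
      have := tendsto_pow_atTop_nhds_zero_of_lt_one (by norm_num : (0:ℝ) ≤ 1/2) (by norm_num)
      simpa using this.const_mul 2
    simpa using hTfV.add hpow
  -- sign selection and positive parts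
  let sgn : ℕ → ℝ := fun k => if mnorm (Pos ((-1:ℝ) • lam k)) ≤ mnorm (Pos (lam k)) then 1 else -1
  let π : ℕ → (Option ℕ →₀ ℝ) := fun k => Pos (sgn k • lam k)
  let u : ℕ → ℝ := fun k => mnorm (π k)
  have hsgn : ∀ k, |sgn k| = 1 := by
    intro k
    show |if mnorm (Pos ((-1:ℝ) • lam k)) ≤ mnorm (Pos (lam k)) then (1:ℝ) else -1| = 1
    split <;> norm_num
  have hflip : ∀ k, mnorm (Pos (-(sgn k • lam k))) ≤ mnorm (Pos (sgn k • lam k)) := by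
    intro k
    show mnorm (Pos (-((if mnorm (Pos ((-1:ℝ) • lam k)) ≤ mnorm (Pos (lam k)) then (1:ℝ) else -1) • lam k)))
      ≤ mnorm (Pos ((if mnorm (Pos ((-1:ℝ) • lam k)) ≤ mnorm (Pos (lam k)) then (1:ℝ) else -1) • lam k))
    split
    · rename_i h
      rw [one_smul]
      have h1 : -(lam k) = (-1:ℝ) • lam k := (neg_one_smul _ _).symm
      rw [h1]
      exact h
    · rename_i h
      have h1 : -((-1:ℝ) • lam k) = lam k := by rw [neg_one_smul, neg_neg]
      rw [h1]
      exact le_of_lt (lt_of_not_ge h)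
  have hsnorm : ∀ k, mnorm (sgn k • lam k) = 1 := by
    intro k
    rw [mnorm_smul, hsgn, one_mul]
    exact Hnorm (nn k)
  have hsnone : ∀ k, |(sgn k • lam k) none| ≤ 3/5 := by
    intro k
    rw [Finsupp.smul_apply, smul_eq_mul, abs_mul, hsgn, one_mul]
    exact hcb k
  have hu15 : ∀ k, 1/5 ≤ u k := by
    intro k
    have hdec := mnorm_Pos_add_Pos_neg (sgn k • lam k)
    have h0 := hflip k
    have h1 := hsnorm k
    have h2 := hsnone k
    have h3 := mnorm_nonneg (Pos (-(sgn k • lam k)))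
    show 1/5 ≤ mnorm (Pos (sgn k • lam k))
    linarith
  have hπdomsupp : ∀ k, (π k).support ⊆ (lam k).support := by
    intro k
    refine subset_trans (Pos_support _) ?_
    exact Finsupp.support_smul
  have hπdomabs : ∀ k x, |π k x| ≤ |lam k x| := by
    intro k x
    refine le_trans (Pos_abs_le _ x) ?_
    rw [Finsupp.smul_apply, smul_eq_mul, abs_mul, hsgn, one_mul]
  have hub : ∀ k, u k ≤ 1 := by
    intro k
    show mnorm (Pos (sgn k • lam k)) ≤ 1
    rw [← Hnorm (nn k)]
    exact mnorm_le_of_dom (hπdomsupp k) (hπdomabs k)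
  have hπnn : ∀ k, ∀ x, 0 ≤ π k x := fun k => Pos_nonneg _
  have hπnone : ∀ k, π k none = 0 := fun k => Pos_none _
  -- pushforward to X
  let x0 := φ none
  have hx0 : ∀ t : ℕ, φ (some t) ≠ x0 := by
    intro t he
    have hmem : (some t : Option ℕ) ∈ φ ⁻¹' {φ none} := he
    rw [hfib] at hmem
    simp at hmem
  have hmapnn : ∀ k y, 0 ≤ Finsupp.mapDomain φ (π k) y := fun k y => mapDomain_nonneg (hπnn k) y
  have hu : ∀ k, u k = mIntg (π k) (fun _ => (1:ℝ)) := fun k => mnorm_of_nonneg (hπnn k)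
  have hmapnorm : ∀ k, mnorm (Finsupp.mapDomain φ (π k)) = u k := by
    intro k
    rw [mnorm_of_nonneg (hmapnn k), mIntg_mapDomain, hu k]
    rfl
  have hmapx0 : ∀ k, Finsupp.mapDomain φ (π k) x0 = 0 := by
    intro k
    rw [Finsupp.mapDomain, Finsupp.sum_apply]
    refine Finset.sum_eq_zero fun x hx => ?_
    have hxn : x ≠ none := by
      intro he
      rw [he] at hx
      exact (Finsupp.mem_support_iff.1 hx) (hπnone k)
    obtain ⟨t, rfl⟩ : ∃ t, x = some t := by
      cases x with
      | none => exact absurd rfl hxn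
      | some t => exact ⟨t, rfl⟩
    show (Finsupp.single (φ (some t)) (π k (some t))) x0 = 0
    rw [Finsupp.single_apply, if_neg (hx0 t)]
  let D : ℕ → (X →₀ ℝ) := fun k => Finsupp.mapDomain φ (π k) - Finsupp.single x0 (u k)
  have hDnorm : ∀ k, mnorm (D k) = 2 * u k := by
    intro k
    have hdis : ∀ y, Finsupp.mapDomain φ (π k) y = 0 ∨ (Finsupp.single x0 (u k)) y = 0 := by
      intro y
      by_cases hy : y = x0
      · left; rw [hy]; exact hmapx0 k
      · right; exact Finsupp.single_eq_of_ne (fun e => hy e)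
    show mnorm (Finsupp.mapDomain φ (π k) - Finsupp.single x0 (u k)) = 2 * u k
    rw [mnorm_sub_of_disjoint hdis, hmapnorm k, mnorm_single,
      abs_of_nonneg (le_trans (by norm_num) (hu15 k))]
    ring
  have hDpos : ∀ k, 0 < 2 * u k := fun k => by linarith [hu15 k]
  let σ : ℕ → (X →₀ ℝ) := fun k => ((2 * u k)⁻¹) • D k
  refine ⟨σ, fun k => ?_, ?_⟩
  · show mnorm (((2 * u k)⁻¹) • D k) = 1
    rw [mnorm_smul, hDnorm k, abs_of_nonneg (le_of_lt (inv_pos.2 (hDpos k)))]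
    exact inv_mul_cancel₀ (ne_of_gt (hDpos k))
  · intro g hg hb
    obtain ⟨C, hC⟩ := hb
    have hC0 : 0 ≤ C := le_trans (abs_nonneg (g x0)) (hC x0)
    have hgφ : @Continuous (Option ℕ) ℝ (NFtop G) _ (fun x => g (φ x)) := @Continuous.comp (Option ℕ) X ℝ (NFtop G) tX _ φ g hg hcont
    have key : ∀ k, mIntg (σ k) g
        = ((2 * u k)⁻¹) * mIntg (π k) (fun x => g (φ x) - g x0) := by
      intro k
      show mIntg (((2 * u k)⁻¹) • D k) g = _
      rw [mIntg_smul]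
      congr 1
      show mIntg (Finsupp.mapDomain φ (π k) - Finsupp.single x0 (u k)) g = _
      rw [mIntg_sub, mIntg_single, mIntg_mapDomain,
        mIntg_sub_const (π k) (fun x => g (φ x)) (g x0), hu k]
      have he : (g ∘ φ) = (fun x => g (φ x)) := rfl
      rw [he]
      ring
    rw [Metric.tendsto_atTop]
    intro ε hε
    have hε10 : (0:ℝ) < ε/10 := by linarith
    have hBnone : (none : Option ℕ) ∉ {x : Option ℕ | ε/10 < |g (φ x) - g x0|} := by
      show ¬ (ε/10 < |g (φ none) - g x0|)
      have h0 : g (φ none) - g x0 = 0 := sub_self _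
      rw [h0, abs_zero]
      linarith
    have hBG : {t : ℕ | some t ∉ {x : Option ℕ | ε/10 < |g (φ x) - g x0|}} ∈ G := by
      have hmem := mem_of_contNF hgφ (ε/10) hε10
      refine Filter.mem_of_superset hmem fun t ht => ?_
      show ¬ (ε/10 < |g (φ (some t)) - g x0|)
      exact not_lt.2 (le_of_lt ht)
    obtain ⟨N, hN⟩ := Metric.tendsto_atTop.1
      (V {x : Option ℕ | ε/10 < |g (φ x) - g x0|} hBnone hBG) (ε/(10*(C+1))) (by positivity)
    refine ⟨N, fun k hk => ?_⟩
    have hv := hN k hk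
    rw [Real.dist_eq, sub_zero] at hv
    have hv' : mnormOn (lam k) {x : Option ℕ | ε/10 < |g (φ x) - g x0|} ≤ ε/(10*(C+1)) :=
      le_of_lt (lt_of_le_of_lt (le_abs_self _) hv)
    have hfb : ∀ x, |(fun x => g (φ x) - g x0) x| ≤ 2*C := by
      intro x
      refine le_trans (abs_sub _ _) ?_
      have := hC (φ x)
      have := hC x0
      linarith
    have hbound : |mIntg (π k) (fun x => g (φ x) - g x0)|
        ≤ ε/10 * 1 + 2*C * (ε/(10*(C+1))) := by
      refine le_trans (mIntg_split (le_of_lt hε10) hfb) ?_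
      refine add_le_add ?_ ?_
      · exact mul_le_mul_of_nonneg_left (hub k) (le_of_lt hε10)
      · refine mul_le_mul_of_nonneg_left ?_ (by linarith)
        refine le_trans ?_ hv'
        exact mnormOn_le_of_dom (hπdomsupp k) (hπdomabs k) _
    have hinv : |(2 * u k)⁻¹| ≤ 5/2 := by
      rw [abs_of_nonneg (le_of_lt (inv_pos.2 (hDpos k)))]
      rw [show (5:ℝ)/2 = (2/5)⁻¹ by norm_num]
      exact inv_anti₀ (by norm_num) (by linarith [hu15 k])
    rw [Real.dist_eq, sub_zero, key k]
    have hCC : 2*C * (ε/(10*(C+1))) ≤ ε/5 := by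
      have hstep : 2*C * (ε/(10*(C+1))) ≤ 2*(C+1) * (ε/(10*(C+1))) := by
        refine mul_le_mul_of_nonneg_right (by linarith) (by positivity)
      have heq : 2*(C+1) * (ε/(10*(C+1))) = ε/5 := by
        field_simp
        ring
      linarith
    calc |(2 * u k)⁻¹ * mIntg (π k) (fun x => g (φ x) - g x0)|
        = |(2 * u k)⁻¹| * |mIntg (π k) (fun x => g (φ x) - g x0)| := abs_mul _ _
      _ ≤ (5/2) * (ε/10 * 1 + 2*C * (ε/(10*(C+1)))) :=
          mul_le_mul hinv hbound (abs_nonneg _) (by norm_num)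
      _ < ε := by nlinarith

end StmtAux

/-- Let `X` be a Tychonoff space, `G` a free filter on `ω` and `φ : N_G → X` a
continuous map with `φ⁻¹(φ(p_G)) = {p_G}` (e.g. `φ` injective). If `N_G` has the BJNP,
then so does `X`. -/
theorem stmt18 (X : Type*) [tX : TopologicalSpace X]
    [CompletelyRegularSpace X] [T2Space X]
    (G : Filter ℕ) (hG : IsFreeFilter G) (φ : Option ℕ → X)
    (hcont : @Continuous _ _ (NFtop G) tX φ)
    (hfib : φ ⁻¹' {φ none} = {none})
    (h : BJNP (NFtop G)) : BJNP tX := by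
  obtain ⟨μ0, Hn, Hi⟩ := h
  exact StmtAux.main G hG.2 φ hcont hfib μ0 Hn Hi
end
end

section
/- Let F be a free filter on ω such that the space N_F has the bounded Josefson–Nissenzweig property. If K is a compact Hausdorff space such that N_F is homeomorphic to a subspace of K, then the Banach space C(K) of continuous real-valued functions on K with the supremum norm is not a Grothendieck space. -/
open Filter Topology

noncomputable section

/-- A (normed) Banach space `E` is a Grothendieck space if every weak*-null sequence in
the dual `E*` is weakly null. -/
def IsGrothendieckSpace (E : Type*) [NormedAddCommGroup E] [NormedSpace ℝ E] : Prop :=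
  ∀ x : ℕ → (E →L[ℝ] ℝ),
    (∀ v : E, Tendsto (fun n => x n v) atTop (nhds 0)) →
    ∀ ξ : (E →L[ℝ] ℝ) →L[ℝ] ℝ, Tendsto (fun n => ξ (x n)) atTop (nhds 0)

section Aux

lemma mul_sign_self (r : ℝ) : r * Real.sign r = |r| := by
  rcases lt_trichotomy r 0 with hr | hr | hr
  · rw [Real.sign_of_neg hr, abs_of_neg hr]; ring
  · simp [hr]
  · rw [Real.sign_of_pos hr, abs_of_pos hr]; ring

lemma abs_sign_le_one (r : ℝ) : |Real.sign r| ≤ 1 := by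
  rcases lt_trichotomy r 0 with hr | hr | hr
  · rw [Real.sign_of_neg hr]; norm_num
  · simp [hr]
  · rw [Real.sign_of_pos hr]; norm_num

/-- Evaluation functional on `C(K, ℝ)`. -/
def evalK {K : Type*} [TopologicalSpace K] [CompactSpace K] (y : K) : C(K, ℝ) →L[ℝ] ℝ :=
  LinearMap.mkContinuous
    { toFun := fun f => f y
      map_add' := fun f g => rfl
      map_smul' := fun c f => rfl } 1
    (fun f => by simpa using f.norm_coe_le_norm y)

@[simp] lemma evalK_apply {K : Type*} [TopologicalSpace K] [CompactSpace K] (y : K)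
    (f : C(K, ℝ)) : evalK y f = f y := rfl

/-- The pushforward functional of a finitely supported measure. -/
def XCLM {K : Type*} [TopologicalSpace K] [CompactSpace K] (e : Option ℕ → K)
    (μ : Option ℕ →₀ ℝ) : C(K, ℝ) →L[ℝ] ℝ :=
  ∑ x ∈ μ.support, μ x • evalK (e x)

lemma XCLM_apply {K : Type*} [TopologicalSpace K] [CompactSpace K] (e : Option ℕ → K)
    (μ : Option ℕ →₀ ℝ) (f : C(K, ℝ)) : XCLM e μ f = mIntg μ (fun x => f (e x)) := by
  simp [XCLM, mIntg, ContinuousLinearMap.sum_apply]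

lemma interp {K : Type*} [TopologicalSpace K] [CompactSpace K] [T2Space K]
    {e : Option ℕ → K} (he : Function.Injective e) (g : Option ℕ → ℝ)
    (hg : ∀ x, |g x| ≤ 1) (S : Finset (Option ℕ)) :
    ∃ f : C(K, ℝ), ‖f‖ ≤ 1 ∧ ∀ x ∈ S, f (e x) = g x := by
  classical
  have hsep : ∀ x : Option ℕ, ∃ hx : C(K, ℝ),
      hx (e x) = 1 ∧ (∀ y ∈ S.erase x, hx (e y) = 0) ∧ ∀ z, hx z ∈ Set.Icc (0:ℝ) 1 := by
    intro x
    have hA : IsClosed (↑((S.erase x).image e) : Set K) :=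
      Set.Finite.isClosed (Finset.finite_toSet _)
    have hB : IsClosed ({e x} : Set K) := isClosed_singleton
    have hd : Disjoint (↑((S.erase x).image e) : Set K) {e x} := by
      rw [Set.disjoint_singleton_right]
      intro hmem
      rw [Finset.coe_image, Set.mem_image] at hmem
      obtain ⟨y, hy, hxy⟩ := hmem
      exact Finset.ne_of_mem_erase (Finset.mem_coe.mp hy) (he hxy)
    obtain ⟨hx, h0, h1, hIcc⟩ := exists_continuous_zero_one_of_isClosed hA hB hd
    refine ⟨hx, by simpa using h1 rfl, fun y hy => ?_, hIcc⟩
    have : e y ∈ (↑((S.erase x).image e) : Set K) := by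
      simp only [Finset.coe_image, Set.mem_image, Finset.mem_coe]
      exact ⟨y, hy, rfl⟩
    simpa using h0 this
  choose hfun h1 h0 hIcc using hsep
  set f₀ : C(K, ℝ) := ∑ x ∈ S, g x • hfun x with hf₀
  refine ⟨⟨fun z => max (-1) (min 1 (f₀ z)),
      Continuous.max continuous_const (Continuous.min continuous_const f₀.continuous)⟩, ?_, ?_⟩
  · rw [ContinuousMap.norm_le _ (by norm_num : (0:ℝ) ≤ 1)]
    intro z
    simp only [ContinuousMap.coe_mk, Real.norm_eq_abs, abs_le]
    exact ⟨le_max_left _ _, max_le (by norm_num) (min_le_left _ _)⟩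
  · intro x hx
    have hv : f₀ (e x) = g x := by
      rw [hf₀]
      have hsum : (∑ y ∈ S, g y • hfun y) (e x) = ∑ y ∈ S, g y * hfun y (e x) := by
        rw [ContinuousMap.coe_sum]
        simp [Finset.sum_apply]
      rw [hsum, Finset.sum_eq_single x]
      · rw [h1 x]; ring
      · intro y hy hyx
        rw [h0 y x (Finset.mem_erase.mpr ⟨fun hxy => hyx hxy.symm, hx⟩)]
        ring
      · intro hxS; exact absurd hx hxS
    show max (-1) (min 1 (f₀ (e x))) = g x
    rw [hv, min_eq_right (abs_le.mp (hg x)).2, max_eq_right (abs_le.mp (hg x)).1]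

end Aux

lemma keyXi {K : Type*} [TopologicalSpace K] [CompactSpace K] [T2Space K]
    (e : Option ℕ → K) (he : Function.Injective e) (g : Option ℕ → ℝ)
    (hg : ∀ x, |g x| ≤ 1) :
    ∃ ξ : (C(K, ℝ) →L[ℝ] ℝ) →L[ℝ] ℝ, ∀ μ : Option ℕ →₀ ℝ, ξ (XCLM e μ) = mIntg μ g := by
  classical
  have hf : ∀ m : ℕ, ∃ f : C(K, ℝ), ‖f‖ ≤ 1 ∧
      ∀ x ∈ insert none ((Finset.range m).image some), f (e x) = g x :=
    fun m => interp he g hg _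
  choose f hf1 hf2 using hf
  set U : Ultrafilter ℕ := Ultrafilter.of atTop with hU
  have hUle : (U : Filter ℕ) ≤ atTop := Ultrafilter.of_le atTop
  have hbd : ∀ (φ : C(K, ℝ) →L[ℝ] ℝ) (m : ℕ), |φ (f m)| ≤ ‖φ‖ := by
    intro φ m
    have h1 : ‖φ (f m)‖ ≤ ‖φ‖ * ‖f m‖ := φ.le_opNorm _
    rw [Real.norm_eq_abs] at h1
    nlinarith [norm_nonneg φ, hf1 m, norm_nonneg (f m)]
  have hconv : ∀ φ : C(K, ℝ) →L[ℝ] ℝ, ∃ L : ℝ,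
      Tendsto (fun m => φ (f m)) (U : Filter ℕ) (𝓝 L) := by
    intro φ
    have hmem : ∀ m, φ (f m) ∈ Set.Icc (-‖φ‖) ‖φ‖ := by
      intro m
      have := abs_le.mp (hbd φ m)
      exact ⟨this.1, this.2⟩
    obtain ⟨L, _, hle⟩ := isCompact_Icc.ultrafilter_le_nhds (U.map (fun m => φ (f m)))
      (by
        rw [Ultrafilter.coe_map, le_principal_iff, mem_map]
        exact Filter.univ_mem' hmem)
    refine ⟨L, ?_⟩
    rwa [Ultrafilter.coe_map] at hle
  choose Ξ hΞ using hconv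
  have hadd : ∀ φ ψ, Ξ (φ + ψ) = Ξ φ + Ξ ψ := fun φ ψ =>
    tendsto_nhds_unique (hΞ (φ + ψ))
      (by simpa only [ContinuousLinearMap.add_apply] using (hΞ φ).add (hΞ ψ))
  have hsmul : ∀ (c : ℝ) φ, Ξ (c • φ) = c * Ξ φ := fun c φ =>
    tendsto_nhds_unique (hΞ (c • φ))
      (by simpa only [ContinuousLinearMap.smul_apply, smul_eq_mul] using (hΞ φ).const_mul c)
  have hbound : ∀ φ, ‖Ξ φ‖ ≤ 1 * ‖φ‖ := by
    intro φ
    rw [one_mul, Real.norm_eq_abs]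
    have habs : Tendsto (fun m => |φ (f m)|) (U : Filter ℕ) (𝓝 |Ξ φ|) := (hΞ φ).abs
    exact le_of_tendsto habs (Filter.Eventually.of_forall fun m => hbd φ m)
  refine ⟨LinearMap.mkContinuous
      { toFun := Ξ, map_add' := hadd,
        map_smul' := fun c φ => by simpa using hsmul c φ } 1 hbound, fun μ => ?_⟩
  have hev : ∀ᶠ m in atTop, XCLM e μ (f m) = mIntg μ g := by
    set M : ℕ := (μ.support.sup fun x => Option.getD x 0) + 1 with hM
    filter_upwards [eventually_ge_atTop M] with m hm
    rw [XCLM_apply]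
    apply Finset.sum_congr rfl
    intro x hx
    have hxm : x ∈ insert none ((Finset.range m).image some) := by
      match x with
      | none => exact Finset.mem_insert_self _ _
      | some a =>
        refine Finset.mem_insert_of_mem (Finset.mem_image.mpr ⟨a, ?_, rfl⟩)
        rw [Finset.mem_range]
        have : a ≤ μ.support.sup fun x => Option.getD x 0 :=
          Finset.le_sup (f := fun x => Option.getD x 0) hx
        omega
    show μ x * (f m) (e x) = μ x * g x
    rw [hf2 m x hxm]
  have hlim : Tendsto (fun m => XCLM e μ (f m)) (U : Filter ℕ) (𝓝 (mIntg μ g)) := by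
    have hev' : (fun m => XCLM e μ (f m)) =ᶠ[(U : Filter ℕ)] (fun _ => mIntg μ g) :=
      hev.filter_mono hUle
    exact Tendsto.congr' hev'.symm tendsto_const_nhds
  exact tendsto_nhds_unique (hΞ (XCLM e μ)) hlim

/-- If `F` is a free filter on `ω` such that `N_F` has the BJNP and `N_F` embeds into a
compact Hausdorff space `K`, then the Banach space `C(K)` (continuous real-valued
functions with the sup norm) is not a Grothendieck space. -/
theorem stmt19 (F : Filter ℕ) (hF : IsFreeFilter F) (h : BJNP (NFtop F))
    (K : Type*) [TopologicalSpace K] [CompactSpace K] [T2Space K]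
    (e : Option ℕ → K) (he : @Topology.IsEmbedding _ _ (NFtop F) _ e) :
    ¬ IsGrothendieckSpace C(K, ℝ) := by
  classical
  intro G
  obtain ⟨μ, hμ1, hμ2⟩ := h
  have hecont : @Continuous (Option ℕ) K (NFtop F) _ e :=
    @Topology.IsEmbedding.continuous _ _ e (NFtop F) _ he
  have hinj : Function.Injective e := @Topology.IsEmbedding.injective _ _ (NFtop F) _ e he
  -- the functionals are weak*-null
  have hstar : ∀ v : C(K, ℝ), Tendsto (fun n => XCLM e (μ n) v) atTop (𝓝 0) := by
    intro v
    have hcont : @Continuous (Option ℕ) ℝ (NFtop F) _ (fun x => v (e x)) :=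
      @Continuous.comp _ _ _ (NFtop F) _ _ _ _ (map_continuous v) hecont
    have hbdd : ∃ C : ℝ, ∀ x, |v (e x)| ≤ C :=
      ⟨‖v‖, fun x => by simpa [Real.norm_eq_abs] using v.norm_coe_le_norm (e x)⟩
    have := hμ2 _ hcont hbdd
    simpa only [XCLM_apply] using this
  -- point masses at isolated points tend to 0
  have hpt : ∀ a : ℕ, Tendsto (fun n => μ n (some a)) atTop (𝓝 0) := by
    intro a
    have hcont : @Continuous (Option ℕ) ℝ (NFtop F) _
        (fun x => if x = some a then (1:ℝ) else 0) := by
      rw [@continuous_def _ _ (NFtop F) _]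
      intro V hV
      show none ∈ _ → _
      intro hnone
      have h0 : (0:ℝ) ∈ V := by
        have : (if (none : Option ℕ) = some a then (1:ℝ) else 0) ∈ V := hnone
        simpa using this
      have hcof : {b : ℕ | b ≠ a} ∈ F := by
        apply hF.2
        rw [Filter.mem_cofinite]
        simp [Set.compl_setOf]
      refine Filter.mem_of_superset hcof ?_
      intro b hb
      show (if some b = some a then (1:ℝ) else 0) ∈ V
      rw [if_neg (by simpa using hb)]
      exact h0
    have hb : ∃ C : ℝ, ∀ x : Option ℕ, |if x = some a then (1:ℝ) else 0| ≤ C :=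
      ⟨1, fun x => by split <;> norm_num⟩
    have hten := hμ2 _ hcont hb
    have heq : ∀ n, mIntg (μ n) (fun x => if x = some a then (1:ℝ) else 0) = μ n (some a) := by
      intro n
      unfold mIntg
      calc ∑ x ∈ (μ n).support, μ n x * (if x = some a then (1:ℝ) else 0)
          = ∑ x ∈ (μ n).support, (if x = some a then μ n x else 0) := by
            apply Finset.sum_congr rfl; intro x _; split <;> simp
        _ = if some a ∈ (μ n).support then μ n (some a) else 0 :=
            Finset.sum_ite_eq' _ _ _
        _ = μ n (some a) := by
            split
            · rfl
            · exact (Finsupp.notMem_support_iff.mp (by assumption)).symm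
    simpa only [heq] using hten
  set c : ℕ → ℝ := fun n => μ n none with hcdef
  by_cases hc0 : Tendsto c atTop (𝓝 0)
  · -- gliding hump case
    have hw : ∀ Q : Finset (Option ℕ),
        Tendsto (fun n => ∑ x ∈ Q, |μ n x|) atTop (𝓝 0) := by
      intro Q
      have : Tendsto (fun n => ∑ x ∈ Q, |μ n x|) atTop (𝓝 (∑ x ∈ Q, (0:ℝ))) := by
        apply tendsto_finset_sum
        intro x _
        match x with
        | none => simpa using hc0.abs
        | some a => simpa using (hpt a).abs
      simpa using this
    have hnext : ∀ (N : ℕ) (Q : Finset (Option ℕ)),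
        ∃ n, N < n ∧ ∑ x ∈ Q, |μ n x| ≤ 1/8 := by
      intro N Q
      have h1 : ∀ᶠ n in atTop, ∑ x ∈ Q, |μ n x| < 1/8 :=
        (hw Q).eventually_lt_const (by norm_num)
      obtain ⟨n, hn1, hn2⟩ := (h1.and (eventually_gt_atTop N)).exists
      exact ⟨n, hn2, hn1.le⟩
    choose nxt hnxt1 hnxt2 using hnext
    let p : ℕ → ℕ × Finset (Option ℕ) := fun k =>
      Nat.rec (⟨0, insert none (μ 0).support⟩)
        (fun _ ih => ⟨nxt ih.1 ih.2, insert none (ih.2 ∪ (μ (nxt ih.1 ih.2)).support)⟩) k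
    set d : ℕ → ℕ := fun k => (p k).1 with hddef
    set Q : ℕ → Finset (Option ℕ) := fun k => (p k).2 with hQdef
    have hdS : ∀ k, d (k+1) = nxt (d k) (Q k) := fun k => rfl
    have hQS : ∀ k, Q (k+1) = insert none (Q k ∪ (μ (d (k+1))).support) := fun k => rfl
    have hnQ : ∀ k, none ∈ Q k := by
      intro k
      match k with
      | 0 => exact Finset.mem_insert_self _ _
      | k+1 => rw [hQS]; exact Finset.mem_insert_self _ _
    have hmono : ∀ k, Q k ⊆ Q (k+1) := by
      intro k
      rw [hQS k]
      exact fun x hx => Finset.mem_insert_of_mem (Finset.mem_union_left _ hx)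
    have hm : Monotone Q := monotone_nat_of_le_succ (fun k => Finset.le_iff_subset.mpr (hmono k))
    have hsub : ∀ k, (μ (d k)).support ⊆ Q k := by
      intro k
      match k with
      | 0 => exact Finset.subset_insert _ _
      | k+1 =>
        rw [hQS]
        exact fun x hx => Finset.mem_insert_of_mem (Finset.mem_union_right _ hx)
    have hsmall : ∀ k, ∑ x ∈ Q k, |μ (d (k+1)) x| ≤ 1/8 := fun k => by
      rw [hdS]; exact hnxt2 _ _
    have hdlt : ∀ k, d k < d (k+1) := fun k => by rw [hdS]; exact hnxt1 _ _
    set g : Option ℕ → ℝ := fun x =>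
      if hx : ∃ j, x ∈ (μ (d j)).support then
        Real.sign (μ (d (Nat.find hx)) x) else 0 with hgdef
    have hgb : ∀ x, |g x| ≤ 1 := by
      intro x
      rw [hgdef]
      dsimp only
      split
      · exact abs_sign_le_one _
      · norm_num
    obtain ⟨ξ, hξ⟩ := keyXi e hinj g hgb
    have hten := G (fun n => XCLM e (μ n)) hstar ξ
    have hval : ∀ k, (1:ℝ)/2 ≤ mIntg (μ (d (k+1))) g := by
      intro k
      set n := d (k+1) with hn
      set A := (μ n).support with hA
      have hsplit : mIntg (μ n) g =
          (∑ x ∈ A.filter (fun x => x ∈ Q k), μ n x * g x)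
          + (∑ x ∈ A.filter (fun x => ¬ x ∈ Q k), μ n x * g x) :=
        (Finset.sum_filter_add_sum_filter_not A _ _).symm
      have hold2 : ∑ x ∈ A.filter (fun x => x ∈ Q k), |μ n x| ≤ 1/8 := by
        calc ∑ x ∈ A.filter (fun x => x ∈ Q k), |μ n x|
            ≤ ∑ x ∈ Q k, |μ n x| := by
              apply Finset.sum_le_sum_of_subset_of_nonneg
              · intro x hx
                exact (Finset.mem_filter.mp hx).2
              · intro x _ _
                exact abs_nonneg _
          _ ≤ 1/8 := hsmall k
      have hold : |∑ x ∈ A.filter (fun x => x ∈ Q k), μ n x * g x| ≤ 1/8 := by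
        calc |∑ x ∈ A.filter (fun x => x ∈ Q k), μ n x * g x|
            ≤ ∑ x ∈ A.filter (fun x => x ∈ Q k), |μ n x * g x| :=
              Finset.abs_sum_le_sum_abs _ _
          _ ≤ ∑ x ∈ A.filter (fun x => x ∈ Q k), |μ n x| := by
              apply Finset.sum_le_sum
              intro x _
              rw [abs_mul]
              exact mul_le_of_le_one_right (abs_nonneg _) (hgb x)
          _ ≤ 1/8 := hold2
      have hnew : ∑ x ∈ A.filter (fun x => ¬ x ∈ Q k), μ n x * g x
          = ∑ x ∈ A.filter (fun x => ¬ x ∈ Q k), |μ n x| := by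
        apply Finset.sum_congr rfl
        intro x hx
        rw [Finset.mem_filter] at hx
        obtain ⟨hxA, hxQ⟩ := hx
        have hex : ∃ j, x ∈ (μ (d j)).support := ⟨k+1, hxA⟩
        have hfind : Nat.find hex = k + 1 := by
          rw [Nat.find_eq_iff]
          exact ⟨hxA, fun j hj hxj =>
            hxQ (Finset.le_iff_subset.mp (hm (Nat.lt_succ_iff.mp hj)) (hsub j hxj))⟩
        have hgx : g x = Real.sign (μ n x) := by
          rw [hgdef]
          dsimp only
          rw [dif_pos hex, hfind]
        rw [hgx, mul_sign_self]
      have htot : (∑ x ∈ A.filter (fun x => x ∈ Q k), |μ n x|)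
          + (∑ x ∈ A.filter (fun x => ¬ x ∈ Q k), |μ n x|) = 1 := by
        rw [Finset.sum_filter_add_sum_filter_not]
        exact hμ1 n
      have habs := abs_le.mp hold
      rw [hsplit, hnew]
      linarith
    have hfr : ∃ᶠ n in atTop, (1:ℝ)/2 ≤ mIntg (μ n) g := by
      have hdmono : StrictMono d := strictMono_nat_of_lt_succ hdlt
      have hge : ∀ k : ℕ, k ≤ d (k+1) := fun k =>
        le_trans (Nat.le_succ k) hdmono.le_apply
      have htend : Tendsto (fun k => d (k+1)) atTop atTop :=
        tendsto_atTop_mono hge tendsto_id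
      exact htend.frequently (Filter.Frequently.of_forall hval)
    have hev : ∀ᶠ n in atTop, ξ (XCLM e (μ n)) < 1/2 :=
      hten.eventually_lt_const (by norm_num)
    obtain ⟨n, hn1, hn2⟩ := (hfr.and_eventually hev).exists
    rw [hξ] at hn2
    linarith
  · -- atom at `none`
    have hδ : ∃ δ > 0, ∃ᶠ n in atTop, δ ≤ |c n| := by
      by_contra hcon
      push_neg at hcon
      apply hc0
      rw [NormedAddCommGroup.tendsto_nhds_zero]
      intro ε hε
      have hne := hcon ε hε
      filter_upwards [hne] with n hn
      rw [Real.norm_eq_abs]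
      exact hn
    obtain ⟨δ, hδpos, hfreq⟩ := hδ
    have hmain : ∀ σ : ℝ, |σ| ≤ 1 → (∃ᶠ n in atTop, δ ≤ c n * σ) → False := by
      intro σ hσ hfr
      set g : Option ℕ → ℝ := fun x => if x = none then σ else 0 with hgdef
      have hgb : ∀ x, |g x| ≤ 1 := by
        intro x
        rw [hgdef]
        dsimp only
        split
        · exact hσ
        · norm_num
      obtain ⟨ξ, hξ⟩ := keyXi e hinj g hgb
      have hten := G (fun n => XCLM e (μ n)) hstar ξ
      have hvals : ∀ n, ξ (XCLM e (μ n)) = c n * σ := by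
        intro n
        rw [hξ]
        unfold mIntg
        calc ∑ x ∈ (μ n).support, μ n x * g x
            = ∑ x ∈ (μ n).support, (if x = none then μ n x * σ else 0) := by
              apply Finset.sum_congr rfl
              intro x _
              rw [hgdef]
              dsimp only
              split <;> simp
          _ = if none ∈ (μ n).support then μ n none * σ else 0 :=
              Finset.sum_ite_eq' _ _ _
          _ = c n * σ := by
              split
              · rfl
              · rw [hcdef]
                dsimp only
                rw [Finsupp.notMem_support_iff.mp (by assumption)]
                ring
      have hev : ∀ᶠ n in atTop, ξ (XCLM e (μ n)) < δ :=
        hten.eventually_lt_const hδpos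
      obtain ⟨n, hn1, hn2⟩ := (hfr.and_eventually hev).exists
      rw [hvals] at hn2
      linarith
    have hsplit : (∃ᶠ n in atTop, δ ≤ c n) ∨ (∃ᶠ n in atTop, δ ≤ -c n) := by
      rw [← Filter.frequently_or_distrib]
      exact hfreq.mono (fun n hn => le_abs.mp hn)
    obtain hfr | hfr := hsplit
    · exact hmain 1 (by norm_num) (by simpa using hfr)
    · refine hmain (-1) (by norm_num) (hfr.mono fun n hn => ?_)
      rw [mul_neg_one]
      exact hn
end
end
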